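/- arXiv:1109.5877 — 5 statements merged into one kernel-verified Lean document; each statement's English description precedes it below -/
import Mathlib

section
/- Existence of the graded trace (Theorem 3.1, existence part): In the graded setting, for every weight map w : Fin N → Γ the graded trace has the following two properties. (a) For every γ ∈ Γ, every a ∈ 𝒜 γ, every x ∈ Γ and every X ∈ M^x(w), the matrix a • X (twisted action) lies in M^{γ+x}(w) and Γtr_{γ+x}(a • X) = a * Γtr_x(X). (b) For every X ∈ M^x(w) and every Y ∈ M^y(w), the product X * Y lies in M^{x+y}(w) and Γtr_{x+y}(X * Y) = sign(x,y) • Γtr_{x+y}(Y * X); in particular the graded trace vanishes on every graded commutator X * Y − sign(x,y) • (Y * X). -/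
open Matrix

abbrev Gamma (n : ℕ) := Fin n → ZMod 2

def gpair {n : ℕ} (γ δ : Gamma n) : ZMod 2 := ∑ i, γ i * δ i

def gsign {n : ℕ} (γ δ : Gamma n) : ℤ := if gpair γ δ = 1 then -1 else 1

def GammaEven {n : ℕ} (γ : Gamma n) : Prop := gpair γ γ = 0

instance {n : ℕ} : DecidablePred (GammaEven (n := n)) := fun γ =>
  inferInstanceAs (Decidable (gpair γ γ = 0))

/-- `Γ`-graded commutativity of the graded algebra `A`:
`b * a = sign(γ,δ) • (a * b)` for homogeneous `a, b`. -/
def GradedComm {n : ℕ} {K A : Type*} [Field K] [Ring A] [Algebra K A]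
    (𝒜 : Gamma n → Submodule K A) : Prop :=
  ∀ (γ δ : Gamma n) (a b : A), a ∈ 𝒜 γ → b ∈ 𝒜 δ → b * a = gsign γ δ • (a * b)

/-- `X ∈ M^x(w)` : the matrix `X` is homogeneous of degree `x` w.r.t. the weight map `w`. -/
def Mdeg {n : ℕ} {K A : Type*} [Field K] [Ring A] [Algebra K A]
    (𝒜 : Gamma n → Submodule K A) {ι : Type*} (w : ι → Gamma n) (x : Gamma n)
    (X : Matrix ι ι A) : Prop :=
  ∀ α β, X α β ∈ 𝒜 (w α + w β + x)

/-- `X ∈ M⁰(w)` : the matrix `X` is homogeneous of degree `0` w.r.t. the weight map `w`. -/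
def Mdeg0 {n : ℕ} {K A : Type*} [Field K] [Ring A] [Algebra K A]
    (𝒜 : Gamma n → Submodule K A) {ι : Type*} (w : ι → Gamma n)
    (X : Matrix ι ι A) : Prop :=
  ∀ α β, X α β ∈ 𝒜 (w α + w β)

/-- Twisted scalar action of a homogeneous element `a` of degree `γ` on matrices:
`(a • X) α β = sign(γ, w α) • (a * X α β)`. -/
def twist {n : ℕ} {ι : Type*} {A : Type*} [Ring A] (w : ι → Gamma n) (γ : Gamma n) (a : A)
    (X : Matrix ι ι A) : Matrix ι ι A :=
  Matrix.of fun α β => gsign γ (w α) • (a * X α β)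

/-- The graded trace of a homogeneous matrix `X` of degree `x`:
`Γtr_x(X) = ∑ α, sign(w α + x, w α) • X α α`. -/
def gtr {n : ℕ} {ι : Type*} [Fintype ι] {A : Type*} [Ring A]
    (w : ι → Gamma n) (x : Gamma n) (X : Matrix ι ι A) : A :=
  ∑ α, gsign (w α + x) (w α) • X α α

def sgnZ (p : ZMod 2) : ℤ := if p = 1 then -1 else 1

lemma sgnZ_add (p q : ZMod 2) : sgnZ (p + q) = sgnZ p * sgnZ q := by
  revert p q; decide

lemma gsign_eq {n : ℕ} (γ δ : Gamma n) : gsign γ δ = sgnZ (gpair γ δ) := rfl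

lemma gsign_sq {n : ℕ} (γ δ : Gamma n) : gsign γ δ * gsign γ δ = 1 := by
  unfold gsign; split <;> norm_num

lemma pairA {n : ℕ} (a g x : Gamma n) :
    gpair (a + (g + x)) a + gpair g a = gpair (a + x) a := by
  unfold gpair
  rw [← Finset.sum_add_distrib]
  apply Finset.sum_congr rfl
  intro i _
  have h : ∀ p q r : ZMod 2, (p + (q + r)) * p + q * p = (p + r) * p := by decide
  simpa using h (a i) (g i) (x i)

lemma signA {n : ℕ} (a g x : Gamma n) :
    gsign (a + (g + x)) a * gsign g a = gsign (a + x) a := by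
  rw [gsign_eq, gsign_eq, gsign_eq, ← sgnZ_add, pairA]

lemma pairB {n : ℕ} (a s x y : Gamma n) :
    gpair (a + (x + y)) a + gpair (a + s + x) (s + a + y)
      = gpair x y + gpair (s + (x + y)) s := by
  unfold gpair
  rw [← Finset.sum_add_distrib, ← Finset.sum_add_distrib]
  apply Finset.sum_congr rfl
  intro i _
  have h : ∀ p q r t : ZMod 2,
      (p + (r + t)) * p + (p + q + r) * (q + p + t) = r * t + (q + (r + t)) * q := by decide
  simpa using h (a i) (s i) (x i) (y i)

lemma signB {n : ℕ} (a s x y : Gamma n) :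
    gsign (a + (x + y)) a * gsign (a + s + x) (s + a + y)
      = gsign x y * gsign (s + (x + y)) s := by
  rw [gsign_eq, gsign_eq, gsign_eq, gsign_eq, ← sgnZ_add, ← sgnZ_add, pairB]

lemma gamma_add_self {n : ℕ} (γ : Gamma n) : γ + γ = 0 := by
  funext i
  have h : ∀ p : ZMod 2, p + p = 0 := by decide
  exact h (γ i)

/-- **Existence of the graded trace** (Theorem 3.1, existence part).
(a) The graded trace is `A`-linear for the twisted action: for homogeneous `a ∈ 𝒜 γ` and
`X ∈ M^x(w)`, the matrix `a • X` lies in `M^{γ+x}(w)` and `Γtr(a • X) = a * Γtr(X)`.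
(b) The graded trace is a graded Lie algebra homomorphism: for `X ∈ M^x(w)`, `Y ∈ M^y(w)`,
the product `X * Y` lies in `M^{x+y}(w)` and `Γtr(X * Y) = sign(x,y) • Γtr(Y * X)`. -/
theorem graded_trace_existence {n N : ℕ} (hn : 1 ≤ n) (hN : 1 ≤ N)
    {K A : Type*} [Field K] [CharZero K] [Ring A] [Algebra K A]
    (𝒜 : Gamma n → Submodule K A) [GradedAlgebra 𝒜] (hcomm : GradedComm 𝒜)
    (w : Fin N → Gamma n) :
    (∀ (γ : Gamma n) (a : A), a ∈ 𝒜 γ → ∀ (x : Gamma n) (X : Matrix (Fin N) (Fin N) A),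
      Mdeg 𝒜 w x X →
        Mdeg 𝒜 w (γ + x) (twist w γ a X) ∧
        gtr w (γ + x) (twist w γ a X) = a * gtr w x X) ∧
    (∀ (x y : Gamma n) (X Y : Matrix (Fin N) (Fin N) A),
      Mdeg 𝒜 w x X → Mdeg 𝒜 w y Y →
        Mdeg 𝒜 w (x + y) (X * Y) ∧
        gtr w (x + y) (X * Y) = gsign x y • gtr w (x + y) (Y * X)) := by
  constructor
  · intro γ a ha x X hX
    constructor
    · intro α β
      have hmem : a * X α β ∈ 𝒜 (γ + (w α + w β + x)) :=
        SetLike.mul_mem_graded ha (hX α β)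
      have hidx : γ + (w α + w β + x) = w α + w β + (γ + x) := by abel
      rw [hidx] at hmem
      exact zsmul_mem hmem _
    · unfold gtr twist
      simp only [Matrix.of_apply]
      rw [Finset.mul_sum]
      apply Finset.sum_congr rfl
      intro α _
      rw [smul_smul, signA (w α) γ x, mul_smul_comm]
  · intro x y X Y hX hY
    constructor
    · intro α β
      rw [Matrix.mul_apply]
      apply Submodule.sum_mem
      intro σ _
      have hmem : X α σ * Y σ β ∈ 𝒜 ((w α + w σ + x) + (w σ + w β + y)) :=
        SetLike.mul_mem_graded (hX α σ) (hY σ β)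
      have hidx : (w α + w σ + x) + (w σ + w β + y) = w α + w β + (x + y) := by
        have h := gamma_add_self (w σ)
        calc (w α + w σ + x) + (w σ + w β + y)
            = w α + w β + (x + y) + (w σ + w σ) := by abel
          _ = w α + w β + (x + y) := by rw [h, add_zero]
      rwa [hidx] at hmem
    · unfold gtr
      simp only [Matrix.mul_apply]
      rw [Finset.smul_sum]
      simp_rw [Finset.smul_sum]
      conv_rhs => rw [Finset.sum_comm]
      apply Finset.sum_congr rfl
      intro α _
      apply Finset.sum_congr rfl
      intro σ _
      have key : X α σ * Y σ α
          = gsign (w α + w σ + x) (w σ + w α + y) • (Y σ α * X α σ) := by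
        have h := hcomm (w α + w σ + x) (w σ + w α + y) (X α σ) (Y σ α) (hX α σ) (hY σ α)
        rw [h, smul_smul, gsign_sq, one_smul]
      rw [key, smul_smul, smul_smul, signB (w α) (w σ) x y]
end

section
/- Explicit formula for the graded Berezinian (Proposition): Let B be a map satisfying the graded-Berezinian axioms (0), (1), (2) with respect to D_E and D_O. Then for every invertible X ∈ M⁰(w): the submatrix 𝒳₂₂ is an invertible matrix over A, D_O(𝒳₂₂) is an invertible element of A, and B(X) = D_E(𝒳₁₁ − 𝒳₁₂ * 𝒳₂₂⁻¹ * 𝒳₂₁) * (D_O(𝒳₂₂))⁻¹, where 𝒳₂₂⁻¹ denotes the inverse of the O×O submatrix and 𝒳₁₁ − 𝒳₁₂ * 𝒳₂₂⁻¹ * 𝒳₂₁ is a degree-zero graded matrix for the weight map w restricted to E. -/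
open Matrix

/-- Leibniz determinant over a (not necessarily commutative) ring, with the product
taken in the order given by the linear order on the index type. -/
def listDet {ι : Type*} [Fintype ι] [LinearOrder ι] {A : Type*} [Ring A]
    (X : Matrix ι ι A) : A :=
  ∑ σ : Equiv.Perm ι, (Equiv.Perm.sign σ : ℤ) •
    ((Finset.sort Finset.univ (· ≤ ·)).map fun i => X (σ i) i).prod

/-- The product over the values `γ` in the range of `v` (ordered by `lo`) of the ordinary
determinants of the diagonal blocks `{α | v α = γ}` of `X`. -/
def detProd {n : ℕ} (lo : LinearOrder (Gamma n)) {ι : Type*} [Fintype ι] [LinearOrder ι]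
    {A : Type*} [Ring A] (v : ι → Gamma n) (X : Matrix ι ι A) : A :=
  letI : LinearOrder (Gamma n) := lo
  ((Finset.sort (Finset.image v Finset.univ) (· ≤ ·)).map fun γ =>
    listDet (Matrix.of fun a b : {α : ι // v α = γ} => X a.1 b.1)).prod

/-- The graded-determinant axioms for a map `D` on degree-zero graded matrices with weight
map `v` and a fixed linear order `lo` on `Γ`: `D` is valued in `𝒜 0`, is multiplicative,
equals the product of the ordinary block determinants on block-diagonal matrices, and
equals `1` on block-unitriangular matrices. -/
def DetAxioms {n : ℕ} {K A : Type*} [Field K] [Ring A] [Algebra K A]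
    (𝒜 : Gamma n → Submodule K A) (lo : LinearOrder (Gamma n))
    {ι : Type*} [Fintype ι] [LinearOrder ι] (v : ι → Gamma n)
    (D : Matrix ι ι A → A) : Prop :=
  (∀ X, Mdeg0 𝒜 v X → D X ∈ 𝒜 0) ∧
  (∀ X Y, Mdeg0 𝒜 v X → Mdeg0 𝒜 v Y → D (X * Y) = D X * D Y) ∧
  (∀ X, Mdeg0 𝒜 v X → (∀ α β, v α ≠ v β → X α β = 0) → D X = detProd lo v X) ∧
  (∀ X, Mdeg0 𝒜 v X → (∀ α β, v α = v β → X α β = if α = β then (1 : A) else 0) →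
    ((∀ α β, lo.lt (v α) (v β) → X α β = 0) ∨ (∀ α β, lo.lt (v β) (v α) → X α β = 0)) →
    D X = 1)

/-- The even–even block `𝒳₁₁` of a graded matrix. -/
def blkEE {n N : ℕ} {A : Type*} (w : Fin N → Gamma n) (X : Matrix (Fin N) (Fin N) A) :
    Matrix {α : Fin N // GammaEven (w α)} {α : Fin N // GammaEven (w α)} A :=
  X.submatrix Subtype.val Subtype.val

/-- The even–odd block `𝒳₁₂` of a graded matrix. -/
def blkEO {n N : ℕ} {A : Type*} (w : Fin N → Gamma n) (X : Matrix (Fin N) (Fin N) A) :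
    Matrix {α : Fin N // GammaEven (w α)} {α : Fin N // ¬ GammaEven (w α)} A :=
  X.submatrix Subtype.val Subtype.val

/-- The odd–even block `𝒳₂₁` of a graded matrix. -/
def blkOE {n N : ℕ} {A : Type*} (w : Fin N → Gamma n) (X : Matrix (Fin N) (Fin N) A) :
    Matrix {α : Fin N // ¬ GammaEven (w α)} {α : Fin N // GammaEven (w α)} A :=
  X.submatrix Subtype.val Subtype.val

/-- The odd–odd block `𝒳₂₂` of a graded matrix. -/
def blkOO {n N : ℕ} {A : Type*} (w : Fin N → Gamma n) (X : Matrix (Fin N) (Fin N) A) :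
    Matrix {α : Fin N // ¬ GammaEven (w α)} {α : Fin N // ¬ GammaEven (w α)} A :=
  X.submatrix Subtype.val Subtype.val

/-- The weight map `w` restricted to the even index set. -/
def wE {n N : ℕ} (w : Fin N → Gamma n) : {α : Fin N // GammaEven (w α)} → Gamma n :=
  fun α => w α.1

/-- The weight map `w` restricted to the odd index set. -/
def wO {n N : ℕ} (w : Fin N → Gamma n) : {α : Fin N // ¬ GammaEven (w α)} → Gamma n :=
  fun α => w α.1

/-- The graded-Berezinian axioms for a map `B` on invertible degree-zero graded matrices,
relative to graded determinants `DE` and `DO` on the even and odd blocks: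
`B` is valued in `𝒜 0`, is multiplicative, satisfies `B(X) * DO(𝒳₂₂) = DE(𝒳₁₁)` on
block-diagonal matrices (with `DO(𝒳₂₂)` invertible), and equals `1` on block-unitriangular
matrices. -/
def BerAxioms {n N : ℕ} {K A : Type*} [Field K] [Ring A] [Algebra K A]
    (𝒜 : Gamma n → Submodule K A) (w : Fin N → Gamma n)
    (DE : Matrix {α : Fin N // GammaEven (w α)} {α : Fin N // GammaEven (w α)} A → A)
    (DO : Matrix {α : Fin N // ¬ GammaEven (w α)} {α : Fin N // ¬ GammaEven (w α)} A → A)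
    (B : Matrix (Fin N) (Fin N) A → A) : Prop :=
  (∀ X, Mdeg0 𝒜 w X → IsUnit X → B X ∈ 𝒜 0) ∧
  (∀ X Y, Mdeg0 𝒜 w X → IsUnit X → Mdeg0 𝒜 w Y → IsUnit Y → B (X * Y) = B X * B Y) ∧
  (∀ X, Mdeg0 𝒜 w X → IsUnit X → blkEO w X = 0 → blkOE w X = 0 →
    IsUnit (DO (blkOO w X)) ∧ B X * DO (blkOO w X) = DE (blkEE w X)) ∧
  (∀ X, Mdeg0 𝒜 w X → IsUnit X → blkEE w X = 1 → blkOO w X = 1 →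
    (blkEO w X = 0 ∨ blkOE w X = 0) → B X = 1)

/-!
Entries of the off-diagonal blocks of `X ∈ M⁰(w)` are homogeneous of odd degree, and graded
commutativity (with `2` invertible) gives `a * x * a = 0` for every odd homogeneous `a`.
Finitely many such elements generate a nilpotent two-sided ideal, so the odd–odd blocks of `X`
and `X⁻¹` are inverse to each other up to nilpotent matrices, whence `𝒳₂₂` is invertible.
Then `X` is the product of an upper unitriangular block matrix, the block-diagonal matrix
`diag(𝒳₁₁ - 𝒳₁₂ 𝒳₂₂⁻¹ 𝒳₂₁, 𝒳₂₂)` and a lower unitriangular one, all of degree zero because the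
inverse of a degree-zero matrix has degree zero. Axioms (0) and (2) reduce `B X` to `B` of the
diagonal factor, which axiom (1) computes.
-/

theorem Gamma.add_add_add_cancel {n : ℕ} (x y z : Gamma n) : x + y + (y + z) = x + z := by
  rw [add_assoc, ← add_assoc y, ZModModule.add_self, zero_add]

theorem gpair_add_add_self {n : ℕ} (γ δ : Gamma n) :
    gpair (γ + δ) (γ + δ) = gpair γ γ + gpair δ δ := by
  simp only [gpair, ← Finset.sum_add_distrib, Pi.add_apply]
  exact Finset.sum_congr rfl fun i _ =>
    (by decide : ∀ a b : ZMod 2, (a + b) * (a + b) = a * a + b * b) _ _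

theorem gammaEven_add_iff {n : ℕ} (γ δ : Gamma n) :
    GammaEven (γ + δ) ↔ (GammaEven γ ↔ GammaEven δ) := by
  unfold GammaEven
  rw [gpair_add_add_self]
  exact (by decide : ∀ a b : ZMod 2, a + b = 0 ↔ (a = 0 ↔ b = 0)) _ _

namespace GradedComm

variable {n : ℕ} {K A : Type*} [Field K] [CharZero K] [Ring A] [Algebra K A]
  {𝒜 : Gamma n → Submodule K A} {γ : Gamma n} {a : A}

theorem mul_self_eq_zero (hcomm : GradedComm 𝒜) (hγ : ¬ GammaEven γ) (ha : a ∈ 𝒜 γ) :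
    a * a = 0 := by
  have hsign : gsign γ γ = -1 :=
    if_pos ((by decide : ∀ x : ZMod 2, x ≠ 0 → x = 1) _ hγ)
  have h2 : (2 : K) • (a * a) = 0 := by
    rw [two_smul]
    nth_rewrite 1 [hcomm γ γ a a ha ha, hsign]
    simp
  exact (smul_eq_zero.mp h2).resolve_left two_ne_zero

theorem mul_mul_self_eq_zero [GradedAlgebra 𝒜] (hcomm : GradedComm 𝒜) (hγ : ¬ GammaEven γ)
    (ha : a ∈ 𝒜 γ) (x : A) : a * x * a = 0 := by
  induction x using DirectSum.Decomposition.inductionOn 𝒜 with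
  | zero => simp
  | @homogeneous δ y =>
    rw [mul_assoc, hcomm γ δ a y ha y.2, mul_smul_comm, ← mul_assoc,
      hcomm.mul_self_eq_zero hγ ha, zero_mul, smul_zero]
  | add x y hx hy => rw [mul_add, add_mul, hx, hy, add_zero]

end GradedComm

namespace Submodule

variable {R A : Type*} [CommSemiring R] [Semiring A] [Algebra R A]

theorem add_pow_le_pow_add {I J : Submodule R A} (hl : ⊤ * J ≤ J) (hr : J * ⊤ ≤ J)
    (m : ℕ) : (I + J) ^ m ≤ I ^ m + J := by
  induction m with
  | zero => exact le_self_add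
  | succ m ih =>
    have hIJ : I ^ m * J ≤ J := (mul_le_mul_left le_top J).trans hl
    have hJI : J * I ≤ J := (mul_le_mul_right le_top J).trans hr
    have hJJ : J * J ≤ J := (mul_le_mul_right le_top J).trans hr
    calc (I + J) ^ (m + 1) ≤ (I ^ m + J) * (I + J) := by
          rw [pow_succ]; exact mul_le_mul_left ih _
      _ = I ^ (m + 1) + I ^ m * J + (J * I + J * J) := by rw [pow_succ, add_mul, mul_add, mul_add]
      _ ≤ I ^ (m + 1) + J := by
          simp only [add_eq_sup]
          exact sup_le (sup_le le_sup_left (le_sup_of_le_right hIJ))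
            (le_sup_of_le_right (sup_le hJI hJJ))

theorem isNilpotent_add {I J : Submodule R A} (hI : IsNilpotent I) (hJ : J * J = 0)
    (hl : ⊤ * J ≤ J) (hr : J * ⊤ ≤ J) : IsNilpotent (I + J) := by
  obtain ⟨m, hm⟩ := hI
  refine ⟨2 * m, le_bot_iff.mp ?_⟩
  calc (I + J) ^ (2 * m) = ((I + J) ^ m) ^ 2 := by rw [mul_comm, pow_mul]
    _ ≤ (I ^ m + J) ^ 2 := pow_le_pow_left' (add_pow_le_pow_add hl hr m) 2
    _ = ⊥ := by rw [hm, zero_add, sq, hJ, zero_eq_bot]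

theorem span_singleton_mul_top_mul_span_singleton {a : A} (ha : ∀ x, a * x * a = 0) :
    (R ∙ a) * ⊤ * (R ∙ a) = 0 := by
  rw [← span_univ, span_mul_span, span_mul_span, zero_eq_bot, eq_bot_iff, span_le]
  rintro _ ⟨_, ⟨a, rfl, x, -, rfl⟩, a, rfl, rfl⟩
  simp [ha]

theorem isNilpotent_top_mul_span_mul_top {s : Set A} (hfin : s.Finite)
    (hs : ∀ a ∈ s, ∀ x, a * x * a = 0) : IsNilpotent (⊤ * span R s * ⊤) := by
  induction s, hfin using Set.Finite.induction_on with
  | empty => exact ⟨1, by simp⟩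
  | @insert a s _ _ ih =>
    rw [span_insert, ← add_eq_sup, mul_add, add_mul, add_comm]
    refine isNilpotent_add (ih fun b hb => hs b (Set.mem_insert_of_mem a hb)) ?_ ?_ ?_
    · refine le_bot_iff.mp ?_
      calc ⊤ * (R ∙ a) * ⊤ * (⊤ * (R ∙ a) * ⊤)
            = ⊤ * ((R ∙ a) * (⊤ * ⊤) * (R ∙ a)) * ⊤ := by simp only [mul_assoc]
        _ ≤ ⊤ * ((R ∙ a) * ⊤ * (R ∙ a)) * ⊤ := by gcongr; exact le_top
        _ = ⊥ := by
            rw [span_singleton_mul_top_mul_span_singleton (hs a (Set.mem_insert a s))]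
            simp
    · simp only [← mul_assoc]
      exact mul_le_mul_left (mul_le_mul_left le_top _) _
    · simp only [mul_assoc]
      exact mul_le_mul_right (mul_le_mul_right le_top _) _

end Submodule

theorem isUnit_of_isUnit_mul_of_isUnit_mul {M : Type*} [Monoid M] {a b : M}
    (hab : IsUnit (a * b)) (hba : IsUnit (b * a)) : IsUnit a := by
  obtain ⟨u, hu⟩ := hab
  obtain ⟨v, hv⟩ := hba
  have hl : (↑v⁻¹ * b) * a = 1 := by rw [mul_assoc, ← hv, Units.inv_mul]
  have hr : a * (b * ↑u⁻¹) = 1 := by rw [← mul_assoc, ← hu, Units.mul_inv]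
  exact ⟨⟨a, _, hr, left_inv_eq_right_inv hl hr ▸ hl⟩, rfl⟩

namespace Matrix

variable {R A ι κ : Type*} [CommSemiring R] [Semiring A] [Algebra R A]

theorem pow_apply_mem_pow [Fintype ι] [DecidableEq ι] {I : Submodule R A} {M : Matrix ι ι A}
    (hM : ∀ i j, M i j ∈ I) (m : ℕ) (i j : ι) : (M ^ m) i j ∈ I ^ m := by
  induction m generalizing j with
  | zero =>
    rw [pow_zero, pow_zero, one_apply, Submodule.mem_one]
    split_ifs
    · exact ⟨1, map_one _⟩
    · exact ⟨0, map_zero _⟩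
  | succ m ih =>
    rw [pow_succ, pow_succ, mul_apply]
    exact Submodule.sum_mem _ fun c _ => Submodule.mul_mem_mul (ih c) (hM c j)

theorem isNilpotent_of_forall_mem [Fintype ι] [DecidableEq ι] {I : Submodule R A}
    (hI : IsNilpotent I) {M : Matrix ι ι A} (hM : ∀ i j, M i j ∈ I) : IsNilpotent M := by
  obtain ⟨m, hm⟩ := hI
  refine ⟨m, ext fun i j => ?_⟩
  simpa [hm] using pow_apply_mem_pow hM m i j

def entryIdeal (P : Matrix ι κ A) : Submodule ℕ A :=
  ⊤ * Submodule.span ℕ (Set.range (Function.uncurry P)) * ⊤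

theorem mul_apply_mul_mem_entryIdeal (P : Matrix ι κ A) (i : ι) (j : κ) (x y : A) :
    x * P i j * y ∈ P.entryIdeal :=
  Submodule.mul_mem_mul (Submodule.mul_mem_mul Submodule.mem_top
    (Submodule.subset_span (Set.mem_range_self (i, j)))) Submodule.mem_top

theorem isNilpotent_entryIdeal [Finite ι] [Finite κ] {P : Matrix ι κ A}
    (hP : ∀ i j x, P i j * x * P i j = 0) : IsNilpotent P.entryIdeal :=
  Submodule.isNilpotent_top_mul_span_mul_top (Set.finite_range _)
    (by rintro _ ⟨⟨i, j⟩, rfl⟩; exact hP i j)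

theorem isNilpotent_mul_of_forall_mul_mul_self_eq_zero [Fintype ι] [DecidableEq ι] [Fintype κ]
    {P : Matrix ι κ A} (hP : ∀ i j x, P i j * x * P i j = 0) (Z : Matrix κ ι A) :
    IsNilpotent (P * Z) :=
  isNilpotent_of_forall_mem (isNilpotent_entryIdeal hP) fun i j =>
    Submodule.sum_mem _ fun c _ => by simpa using P.mul_apply_mul_mem_entryIdeal i c 1 (Z c j)

theorem isNilpotent_mul_of_forall_mul_mul_self_eq_zero' [Fintype ι] [Fintype κ] [DecidableEq κ]
    {P : Matrix ι κ A} (hP : ∀ i j x, P i j * x * P i j = 0) (Z : Matrix κ ι A) :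
    IsNilpotent (Z * P) :=
  isNilpotent_of_forall_mem (isNilpotent_entryIdeal hP) fun i j =>
    Submodule.sum_mem _ fun c _ => by simpa using P.mul_apply_mul_mem_entryIdeal c j (Z i c) 1

end Matrix

section GradedMatrix

variable {n : ℕ} {K A ι κ ρ : Type*} [Field K] [Ring A] [Algebra K A]
  (𝒜 : Gamma n → Submodule K A)

def IsGradedMatrix (u : ι → Gamma n) (v : κ → Gamma n) (P : Matrix ι κ A) : Prop :=
  ∀ i j, P i j ∈ 𝒜 (u i + v j)

variable {𝒜} {u : ι → Gamma n} {v : κ → Gamma n}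

theorem isGradedMatrix_zero : IsGradedMatrix 𝒜 u v 0 := fun _ _ => zero_mem _

theorem isGradedMatrix_one [DecidableEq ι] [SetLike.GradedOne 𝒜] (u : ι → Gamma n) :
    IsGradedMatrix 𝒜 u u 1 := by
  intro i j
  by_cases h : i = j
  · rw [h, one_apply_eq, ZModModule.add_self]
    exact SetLike.one_mem_graded 𝒜
  · rw [one_apply_ne h]
    exact zero_mem _

theorem IsGradedMatrix.sub {P Q : Matrix ι κ A} (hP : IsGradedMatrix 𝒜 u v P)
    (hQ : IsGradedMatrix 𝒜 u v Q) : IsGradedMatrix 𝒜 u v (P - Q) :=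
  fun i j => sub_mem (hP i j) (hQ i j)

theorem IsGradedMatrix.mul [Fintype κ] [SetLike.GradedMul 𝒜] {t : ρ → Gamma n}
    {P : Matrix ι κ A} {Q : Matrix κ ρ A} (hP : IsGradedMatrix 𝒜 u v P)
    (hQ : IsGradedMatrix 𝒜 v t Q) : IsGradedMatrix 𝒜 u t (P * Q) := fun i j =>
  Submodule.sum_mem _ fun c _ =>
    Gamma.add_add_add_cancel (u i) (v c) (t j) ▸ SetLike.mul_mem_graded (hP i c) (hQ c j)

theorem IsGradedMatrix.fromBlocks {ι' κ' : Type*} {u' : ι' → Gamma n} {v' : κ' → Gamma n}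
    {P : Matrix ι κ A} {Q : Matrix ι κ' A} {R : Matrix ι' κ A} {S : Matrix ι' κ' A}
    (hP : IsGradedMatrix 𝒜 u v P) (hQ : IsGradedMatrix 𝒜 u v' Q)
    (hR : IsGradedMatrix 𝒜 u' v R) (hS : IsGradedMatrix 𝒜 u' v' S) :
    IsGradedMatrix 𝒜 (Sum.elim u u') (Sum.elim v v') (Matrix.fromBlocks P Q R S) := by
  rintro (i | i) (j | j)
  exacts [hP i j, hQ i j, hR i j, hS i j]

open DirectSum in
theorem IsGradedMatrix.ringInverse [Fintype ι] [DecidableEq ι] [GradedAlgebra 𝒜]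
    {Y : Matrix ι ι A} (hY : IsGradedMatrix 𝒜 u u Y) :
    IsGradedMatrix 𝒜 u u (Ring.inverse Y) := by
  by_cases hu : IsUnit Y
  swap
  · rw [Ring.inverse_non_unit _ hu]
    exact isGradedMatrix_zero
  -- the degree-zero part of the inverse is already a right inverse of `Y`
  let Z₀ : Matrix ι ι A := of fun i j => (decompose 𝒜 (Ring.inverse Y i j) (u i + u j) : A)
  have hYZ₀ : Y * Z₀ = 1 := by
    ext i j
    calc (Y * Z₀) i j = decompose 𝒜 ((Y * Ring.inverse Y) i j) (u i + u j) := by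
          simp only [mul_apply, of_apply, decompose_sum, DirectSum.sum_apply,
            AddSubmonoidClass.coe_finsetSum, Z₀]
          refine Finset.sum_congr rfl fun c _ => ?_
          rw [← Gamma.add_add_add_cancel (u i) (u c) (u j),
            coe_decompose_mul_add_of_left_mem 𝒜 (hY i c)]
      _ = (1 : Matrix ι ι A) i j := by
          rw [Ring.mul_inverse_cancel _ hu]
          exact decompose_of_mem_same 𝒜 (isGradedMatrix_one u i j)
  have hZ₀ : Ring.inverse Y = Z₀ := by
    rw [← mul_one (Ring.inverse Y), ← hYZ₀, ← mul_assoc, Ring.inverse_mul_cancel _ hu,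
      one_mul]
  rw [hZ₀]
  exact fun i j => SetLike.coe_mem _

end GradedMatrix

theorem Matrix.fromBlocks_eq_of_isUnit₂₂ {l m α : Type*} [Fintype l] [Fintype m]
    [DecidableEq l] [DecidableEq m] [Ring α] (P : Matrix l l α) (Q : Matrix l m α)
    (R : Matrix m l α) {S : Matrix m m α} (hS : IsUnit S) :
    fromBlocks P Q R S =
      fromBlocks 1 (Q * Ring.inverse S) 0 1 * fromBlocks (P - Q * Ring.inverse S * R) 0 0 S *
        fromBlocks 1 0 (Ring.inverse S * R) 1 := by
  simp [fromBlocks_multiply, Matrix.mul_assoc, Ring.mul_inverse_cancel _ hS,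
    Ring.inverse_mul_cancel _ hS, ← Matrix.mul_assoc S]

section Blocks

variable {n N : ℕ} {A : Type*} (w : Fin N → Gamma n)

def ofBlocks (P : Matrix {α // GammaEven (w α)} {α // GammaEven (w α)} A)
    (Q : Matrix {α // GammaEven (w α)} {α // ¬ GammaEven (w α)} A)
    (R : Matrix {α // ¬ GammaEven (w α)} {α // GammaEven (w α)} A)
    (S : Matrix {α // ¬ GammaEven (w α)} {α // ¬ GammaEven (w α)} A) :
    Matrix (Fin N) (Fin N) A :=
  reindex (Equiv.sumCompl fun α => GammaEven (w α)) (Equiv.sumCompl fun α => GammaEven (w α))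
    (fromBlocks P Q R S)

noncomputable def schurEE [Ring A] (X : Matrix (Fin N) (Fin N) A) :
    Matrix {α // GammaEven (w α)} {α // GammaEven (w α)} A :=
  blkEE w X - blkEO w X * Ring.inverse (blkOO w X) * blkOE w X

variable {P : Matrix {α // GammaEven (w α)} {α // GammaEven (w α)} A}
  {Q : Matrix {α // GammaEven (w α)} {α // ¬ GammaEven (w α)} A}
  {R : Matrix {α // ¬ GammaEven (w α)} {α // GammaEven (w α)} A}
  {S : Matrix {α // ¬ GammaEven (w α)} {α // ¬ GammaEven (w α)} A}

@[simp] theorem blkEE_ofBlocks : blkEE w (ofBlocks w P Q R S) = P := by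
  ext; simp [ofBlocks, blkEE]

@[simp] theorem blkEO_ofBlocks : blkEO w (ofBlocks w P Q R S) = Q := by
  ext; simp [ofBlocks, blkEO]

@[simp] theorem blkOE_ofBlocks : blkOE w (ofBlocks w P Q R S) = R := by
  ext; simp [ofBlocks, blkOE]

@[simp] theorem blkOO_ofBlocks : blkOO w (ofBlocks w P Q R S) = S := by
  ext; simp [ofBlocks, blkOO]

theorem ofBlocks_blk (X : Matrix (Fin N) (Fin N) A) :
    ofBlocks w (blkEE w X) (blkEO w X) (blkOE w X) (blkOO w X) = X := by
  rw [ofBlocks, ← Equiv.eq_symm_apply, reindex_symm]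
  ext (i | i) (j | j) <;> rfl

theorem ofBlocks_mul [Semiring A]
    {P' : Matrix {α // GammaEven (w α)} {α // GammaEven (w α)} A}
    {Q' : Matrix {α // GammaEven (w α)} {α // ¬ GammaEven (w α)} A}
    {R' : Matrix {α // ¬ GammaEven (w α)} {α // GammaEven (w α)} A}
    {S' : Matrix {α // ¬ GammaEven (w α)} {α // ¬ GammaEven (w α)} A} :
    ofBlocks w P Q R S * ofBlocks w P' Q' R' S' =
      ofBlocks w (P * P' + Q * R') (P * Q' + Q * S') (R * P' + S * R') (R * Q' + S * S') := by
  simp only [ofBlocks, reindex_apply, submatrix_mul_equiv, fromBlocks_multiply]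

theorem ofBlocks_one [Semiring A] : ofBlocks w (1 : Matrix _ _ A) 0 0 1 = 1 := by
  simp [ofBlocks]

theorem blkOO_mul [Semiring A] (X Y : Matrix (Fin N) (Fin N) A) :
    blkOO w (X * Y) = blkOE w X * blkEO w Y + blkOO w X * blkOO w Y := by
  conv_lhs => rw [← ofBlocks_blk w X, ← ofBlocks_blk w Y, ofBlocks_mul, blkOO_ofBlocks]

theorem blkOO_one [Semiring A] : blkOO w (1 : Matrix (Fin N) (Fin N) A) = 1 := by
  rw [← ofBlocks_one w, blkOO_ofBlocks]

theorem isUnit_ofBlocks_upper_unitriangular [Ring A]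
    (Q : Matrix {α // GammaEven (w α)} {α // ¬ GammaEven (w α)} A) :
    IsUnit (ofBlocks w 1 Q 0 1) :=
  ⟨⟨ofBlocks w 1 Q 0 1, ofBlocks w 1 (-Q) 0 1, by simp [ofBlocks_mul, ofBlocks_one],
    by simp [ofBlocks_mul, ofBlocks_one]⟩, rfl⟩

theorem isUnit_ofBlocks_lower_unitriangular [Ring A]
    (R : Matrix {α // ¬ GammaEven (w α)} {α // GammaEven (w α)} A) :
    IsUnit (ofBlocks w 1 0 R 1) :=
  ⟨⟨ofBlocks w 1 0 R 1, ofBlocks w 1 0 (-R) 1, by simp [ofBlocks_mul, ofBlocks_one],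
    by simp [ofBlocks_mul, ofBlocks_one]⟩, rfl⟩

theorem eq_ofBlocks_mul_mul_of_isUnit_blkOO [Ring A] {X : Matrix (Fin N) (Fin N) A}
    (hX : IsUnit (blkOO w X)) :
    X = ofBlocks w 1 (blkEO w X * Ring.inverse (blkOO w X)) 0 1 *
      ofBlocks w (schurEE w X) 0 0 (blkOO w X) *
      ofBlocks w 1 0 (Ring.inverse (blkOO w X) * blkOE w X) 1 := by
  simp only [ofBlocks, reindex_apply, submatrix_mul_equiv, schurEE]
  rw [← fromBlocks_eq_of_isUnit₂₂ _ _ _ hX]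
  exact (ofBlocks_blk w X).symm

variable {K : Type*} [Field K] [Ring A] [Algebra K A] {𝒜 : Gamma n → Submodule K A}

theorem mdeg0_ofBlocks (hP : IsGradedMatrix 𝒜 (wE w) (wE w) P)
    (hQ : IsGradedMatrix 𝒜 (wE w) (wO w) Q) (hR : IsGradedMatrix 𝒜 (wO w) (wE w) R)
    (hS : IsGradedMatrix 𝒜 (wO w) (wO w) S) : Mdeg0 𝒜 w (ofBlocks w P Q R S) := by
  have hw : ∀ α,
      Sum.elim (wE w) (wO w) ((Equiv.sumCompl fun α => GammaEven (w α)).symm α) = w α := by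
    intro α
    by_cases h : GammaEven (w α)
    · rw [Equiv.sumCompl_symm_apply_of_pos (p := fun α => GammaEven (w α)) h]; rfl
    · rw [Equiv.sumCompl_symm_apply_of_neg (p := fun α => GammaEven (w α)) h]; rfl
  intro α β
  have h := hP.fromBlocks hQ hR hS ((Equiv.sumCompl _).symm α) ((Equiv.sumCompl _).symm β)
  rwa [hw, hw] at h

variable {X : Matrix (Fin N) (Fin N) A}

theorem Mdeg0.isGradedMatrix_blkEE (hX : Mdeg0 𝒜 w X) :
    IsGradedMatrix 𝒜 (wE w) (wE w) (blkEE w X) := fun i j => hX i j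

theorem Mdeg0.isGradedMatrix_blkEO (hX : Mdeg0 𝒜 w X) :
    IsGradedMatrix 𝒜 (wE w) (wO w) (blkEO w X) := fun i j => hX i j

theorem Mdeg0.isGradedMatrix_blkOE (hX : Mdeg0 𝒜 w X) :
    IsGradedMatrix 𝒜 (wO w) (wE w) (blkOE w X) := fun i j => hX i j

theorem Mdeg0.isGradedMatrix_blkOO (hX : Mdeg0 𝒜 w X) :
    IsGradedMatrix 𝒜 (wO w) (wO w) (blkOO w X) := fun i j => hX i j

theorem mdeg0_schurEE [GradedAlgebra 𝒜] (hX : Mdeg0 𝒜 w X) :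
    Mdeg0 𝒜 (wE w) (schurEE w X) :=
  hX.isGradedMatrix_blkEE.sub <|
    (hX.isGradedMatrix_blkEO.mul hX.isGradedMatrix_blkOO.ringInverse).mul hX.isGradedMatrix_blkOE

end Blocks

section Berezinian

variable {n N : ℕ} {K A : Type*} [Field K] [Ring A] [Algebra K A]
  {𝒜 : Gamma n → Submodule K A} {w : Fin N → Gamma n} {X : Matrix (Fin N) (Fin N) A}

theorem isUnit_blkOO [CharZero K] [GradedAlgebra 𝒜] (hcomm : GradedComm 𝒜)
    (hX : Mdeg0 𝒜 w X) (hXu : IsUnit X) : IsUnit (blkOO w X) := by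
  obtain ⟨⟨X, Z, hXZ, hZX⟩, rfl⟩ := hXu
  have hodd : ∀ i j, ¬ (GammaEven (w i) ↔ GammaEven (w j)) → ∀ x, X i j * x * X i j = 0 :=
    fun i j h => hcomm.mul_mul_self_eq_zero (mt (gammaEven_add_iff _ _).mp h) (hX i j)
  have hOE : IsNilpotent (blkOE w X * blkEO w Z) :=
    isNilpotent_mul_of_forall_mul_mul_self_eq_zero (P := blkOE w X)
      (fun i j => hodd i j (by simp [i.2, j.2])) _
  have hEO : IsNilpotent (blkOE w Z * blkEO w X) :=
    isNilpotent_mul_of_forall_mul_mul_self_eq_zero' (P := blkEO w X)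
      (fun i j => hodd i j (by simp [i.2, j.2])) _
  have h₁ : blkOO w X * blkOO w Z = 1 - blkOE w X * blkEO w Z :=
    eq_sub_of_add_eq' (by rw [← blkOO_mul, hXZ, blkOO_one])
  have h₂ : blkOO w Z * blkOO w X = 1 - blkOE w Z * blkEO w X :=
    eq_sub_of_add_eq' (by rw [← blkOO_mul, hZX, blkOO_one])
  exact isUnit_of_isUnit_mul_of_isUnit_mul (h₁ ▸ hOE.isUnit_one_sub)
    (h₂ ▸ hEO.isUnit_one_sub)

namespace BerAxioms

variable {DE : Matrix {α // GammaEven (w α)} {α // GammaEven (w α)} A → A}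
  {DO : Matrix {α // ¬ GammaEven (w α)} {α // ¬ GammaEven (w α)} A → A}
  {B : Matrix (Fin N) (Fin N) A → A}

theorem map_ofBlocks_upper_unitriangular [SetLike.GradedOne 𝒜] (hB : BerAxioms 𝒜 w DE DO B)
    {Q : Matrix {α // GammaEven (w α)} {α // ¬ GammaEven (w α)} A}
    (hQ : IsGradedMatrix 𝒜 (wE w) (wO w) Q) : B (ofBlocks w 1 Q 0 1) = 1 :=
  hB.2.2.2 _ (mdeg0_ofBlocks w (isGradedMatrix_one _) hQ isGradedMatrix_zero
    (isGradedMatrix_one _)) (isUnit_ofBlocks_upper_unitriangular w Q) (blkEE_ofBlocks w)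
    (blkOO_ofBlocks w) (.inr (blkOE_ofBlocks w))

theorem map_ofBlocks_lower_unitriangular [SetLike.GradedOne 𝒜] (hB : BerAxioms 𝒜 w DE DO B)
    {R : Matrix {α // ¬ GammaEven (w α)} {α // GammaEven (w α)} A}
    (hR : IsGradedMatrix 𝒜 (wO w) (wE w) R) : B (ofBlocks w 1 0 R 1) = 1 :=
  hB.2.2.2 _ (mdeg0_ofBlocks w (isGradedMatrix_one _) isGradedMatrix_zero hR
    (isGradedMatrix_one _)) (isUnit_ofBlocks_lower_unitriangular w R) (blkEE_ofBlocks w)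
    (blkOO_ofBlocks w) (.inl (blkEO_ofBlocks w))

theorem isUnit_and_mul_map_ofBlocks_diagonal (hB : BerAxioms 𝒜 w DE DO B)
    {P : Matrix {α // GammaEven (w α)} {α // GammaEven (w α)} A}
    {S : Matrix {α // ¬ GammaEven (w α)} {α // ¬ GammaEven (w α)} A}
    (hP : IsGradedMatrix 𝒜 (wE w) (wE w) P) (hS : IsGradedMatrix 𝒜 (wO w) (wO w) S)
    (hu : IsUnit (ofBlocks w P 0 0 S)) :
    IsUnit (DO S) ∧ B (ofBlocks w P 0 0 S) * DO S = DE P := by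
  simpa using hB.2.2.1 _ (mdeg0_ofBlocks w hP isGradedMatrix_zero isGradedMatrix_zero hS) hu
    (blkEO_ofBlocks w) (blkOE_ofBlocks w)

theorem map_eq_map_ofBlocks_schurEE [GradedAlgebra 𝒜] (hB : BerAxioms 𝒜 w DE DO B)
    (hX : Mdeg0 𝒜 w X) (hXu : IsUnit X) (hS : IsUnit (blkOO w X)) :
    IsUnit (ofBlocks w (schurEE w X) 0 0 (blkOO w X)) ∧
      B X = B (ofBlocks w (schurEE w X) 0 0 (blkOO w X)) := by
  have hW := hX.isGradedMatrix_blkOO.ringInverse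
  have hQW := hX.isGradedMatrix_blkEO.mul hW
  have hWR := hW.mul hX.isGradedMatrix_blkOE
  set U := ofBlocks w 1 (blkEO w X * Ring.inverse (blkOO w X)) 0 1
  set D := ofBlocks w (schurEE w X) 0 0 (blkOO w X)
  set L := ofBlocks w 1 0 (Ring.inverse (blkOO w X) * blkOE w X) 1
  have hUDL : X = U * D * L := eq_ofBlocks_mul_mul_of_isUnit_blkOO w hS
  have hU : Mdeg0 𝒜 w U :=
    mdeg0_ofBlocks w (isGradedMatrix_one _) hQW isGradedMatrix_zero (isGradedMatrix_one _)
  have hD : Mdeg0 𝒜 w D :=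
    mdeg0_ofBlocks w (mdeg0_schurEE w hX) isGradedMatrix_zero isGradedMatrix_zero
      hX.isGradedMatrix_blkOO
  have hL : Mdeg0 𝒜 w L :=
    mdeg0_ofBlocks w (isGradedMatrix_one _) isGradedMatrix_zero hWR (isGradedMatrix_one _)
  have hUu : IsUnit U := isUnit_ofBlocks_upper_unitriangular w _
  have hLu : IsUnit L := isUnit_ofBlocks_lower_unitriangular w _
  have hDu : IsUnit D := (hUu.mul_left_iff).mp ((hLu.mul_right_iff).mp (hUDL ▸ hXu))
  refine ⟨hDu, ?_⟩
  rw [hUDL, hB.2.1 _ _ (IsGradedMatrix.mul hU hD) (hUu.mul hDu) hL hLu, hB.2.1 _ _ hU hUu hD hDu,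
    hB.map_ofBlocks_upper_unitriangular hQW, hB.map_ofBlocks_lower_unitriangular hWR, one_mul,
    mul_one]

end BerAxioms

end Berezinian

theorem graded_ber_formula_general {n N : ℕ}
    {K A : Type*} [Field K] [CharZero K] [Ring A] [Algebra K A]
    (𝒜 : Gamma n → Submodule K A) [GradedAlgebra 𝒜] (hcomm : GradedComm 𝒜)
    (w : Fin N → Gamma n)
    (DE : Matrix {α : Fin N // GammaEven (w α)} {α : Fin N // GammaEven (w α)} A → A)
    (DO : Matrix {α : Fin N // ¬ GammaEven (w α)} {α : Fin N // ¬ GammaEven (w α)} A → A)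
    (B : Matrix (Fin N) (Fin N) A → A) (hB : BerAxioms 𝒜 w DE DO B) :
    ∀ X : Matrix (Fin N) (Fin N) A, Mdeg0 𝒜 w X → IsUnit X →
      IsUnit (blkOO w X) ∧
      IsUnit (DO (blkOO w X)) ∧
      Mdeg0 𝒜 (wE w) (blkEE w X - blkEO w X * Ring.inverse (blkOO w X) * blkOE w X) ∧
      B X = DE (blkEE w X - blkEO w X * Ring.inverse (blkOO w X) * blkOE w X) *
        Ring.inverse (DO (blkOO w X)) := by
  intro X hX hXu
  have hS : IsUnit (blkOO w X) := isUnit_blkOO hcomm hX hXu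
  have hschur : Mdeg0 𝒜 (wE w) (schurEE w X) := mdeg0_schurEE w hX
  obtain ⟨hDu, hBX⟩ := hB.map_eq_map_ofBlocks_schurEE hX hXu hS
  obtain ⟨hDO, hBD⟩ :=
    hB.isUnit_and_mul_map_ofBlocks_diagonal hschur hX.isGradedMatrix_blkOO hDu
  refine ⟨hS, hDO, hschur, ?_⟩
  rw [hBX, ← schurEE, ← hBD, mul_assoc, Ring.mul_inverse_cancel _ hDO, mul_one]

/-- **Explicit formula for the graded Berezinian** (Proposition).
If `B` satisfies the graded-Berezinian axioms, then for every invertible `X ∈ M⁰(w)` the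
odd–odd block `𝒳₂₂` is invertible, `DO(𝒳₂₂)` is invertible in `A`, the Schur complement
`𝒳₁₁ − 𝒳₁₂ 𝒳₂₂⁻¹ 𝒳₂₁` is a degree-zero graded matrix for `w` restricted to the even
indices, and `B(X) = DE(𝒳₁₁ − 𝒳₁₂ 𝒳₂₂⁻¹ 𝒳₂₁) * (DO(𝒳₂₂))⁻¹`. -/
theorem graded_ber_formula {n N : ℕ} (hn : 1 ≤ n) (hN : 1 ≤ N)
    {K A : Type*} [Field K] [CharZero K] [Ring A] [Algebra K A]
    (𝒜 : Gamma n → Submodule K A) [GradedAlgebra 𝒜] (hcomm : GradedComm 𝒜)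
    (w : Fin N → Gamma n) (lo : LinearOrder (Gamma n))
    (DE : Matrix {α : Fin N // GammaEven (w α)} {α : Fin N // GammaEven (w α)} A → A)
    (DO : Matrix {α : Fin N // ¬ GammaEven (w α)} {α : Fin N // ¬ GammaEven (w α)} A → A)
    (hDE : DetAxioms 𝒜 lo (wE w) DE) (hDO : DetAxioms 𝒜 lo (wO w) DO)
    (B : Matrix (Fin N) (Fin N) A → A) (hB : BerAxioms 𝒜 w DE DO B) :
    ∀ X : Matrix (Fin N) (Fin N) A, Mdeg0 𝒜 w X → IsUnit X →
      IsUnit (blkOO w X) ∧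
      IsUnit (DO (blkOO w X)) ∧
      Mdeg0 𝒜 (wE w) (blkEE w X - blkEO w X * Ring.inverse (blkOO w X) * blkOE w X) ∧
      B X = DE (blkEE w X - blkEO w X * Ring.inverse (blkOO w X) * blkOE w X) *
        Ring.inverse (DO (blkOO w X)) :=
  graded_ber_formula_general 𝒜 hcomm w DE DO B hB
end

section
/- Determinant identity for elementary off-diagonal blocks, even case (Lemma): Let u : Fin N₁ → Γ and v : Fin N₂ → Γ be weight maps all of whose values are even, and let D_u and D_v be maps satisfying the graded-determinant axioms for u and for v (with the same linear order ≼ on Γ). Let P : Matrix (Fin N₁) (Fin N₂) A satisfy P α j ∈ 𝒜 (u α + v j) for all α, j, and let Q : Matrix (Fin N₂) (Fin N₁) A satisfy Q j α ∈ 𝒜 (v j + u α) for all j, α. If P has at most one nonzero entry, or Q has at most one nonzero entry, then 1 + P * Q is a degree-zero graded matrix for u, 1 + Q * P is a degree-zero graded matrix for v, and D_u(1 + P * Q) = D_v(1 + Q * P). -/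
open Matrix

/-- A matrix is elementary if it has at most one nonzero entry. -/
def Elementary {ι κ A : Type*} [Zero A] (P : Matrix ι κ A) : Prop :=
  ∀ α j α' j', P α j ≠ 0 → P α' j' ≠ 0 → α = α' ∧ j = j'

/-! If `P` is elementary, with single entry `p` at `(α₀, j₀)`, then `1 + P Q` differs from the
identity only in row `α₀` and `1 + Q P` only in column `j₀` (symmetrically when `Q` is
elementary). For `N` supported in one row or column, `1 + N` is a product of `1 + N_<`, `1 + N_>`
and `1 + N_=`, the parts of `N` below, above and on the block diagonal, taken in an order in which
the cross terms vanish. The triangular factors have determinant `1`, and in each diagonal block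
every nontrivial permutation meets a zero entry, so the block-diagonal factor has determinant
`1 + N a a`. Hence the two sides are `1 + p q` and `1 + q p`, which agree because `p` and `q` are
homogeneous of the same even degree `u α₀ + v j₀`, so graded commutativity carries no sign. -/

lemma one_add_mul_one_add_of_mul_eq_zero {R : Type*} [Ring R] {x y : R} (h : x * y = 0) :
    (1 + x) * (1 + y) = 1 + (x + y) := by
  rw [add_mul, mul_add, mul_add, h]
  simp only [mul_one, one_mul, add_zero]
  abel

section Gamma

variable {n : ℕ}

lemma gpair_self_eq_sum (γ : Gamma n) : gpair γ γ = ∑ i, γ i :=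
  Finset.sum_congr rfl fun i _ => (by decide : ∀ x : ZMod 2, x * x = x) (γ i)

lemma GammaEven.add {γ δ : Gamma n} (hγ : GammaEven γ) (hδ : GammaEven δ) :
    GammaEven (γ + δ) := by
  unfold GammaEven at hγ hδ ⊢
  rw [gpair_self_eq_sum] at hγ hδ ⊢
  simp only [Pi.add_apply, Finset.sum_add_distrib, hγ, hδ, add_zero]

lemma gsign_self_of_even {γ : Gamma n} (hγ : GammaEven γ) : gsign γ γ = 1 := by
  simp [gsign, show gpair γ γ = 0 from hγ]

end Gamma

namespace Matrix

variable {ι κ A : Type*}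

section Support

variable [Zero A]

def SupportedInRow (N : Matrix ι κ A) (a : ι) : Prop := ∀ α β, α ≠ a → N α β = 0

def SupportedInCol (N : Matrix ι κ A) (b : κ) : Prop := ∀ α β, β ≠ b → N α β = 0

open Classical in
noncomputable def restrictEntries (p : ι → κ → Prop) (N : Matrix ι κ A) : Matrix ι κ A :=
  of fun α β => if p α β then N α β else 0

variable {p : ι → κ → Prop} {N : Matrix ι κ A} {α : ι} {β : κ}

lemma restrictEntries_apply_of_pos (h : p α β) : restrictEntries p N α β = N α β := if_pos h

lemma restrictEntries_apply_of_neg (h : ¬p α β) : restrictEntries p N α β = 0 := if_neg h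

lemma SupportedInRow.restrictEntries {a : ι} (hN : N.SupportedInRow a) :
    (N.restrictEntries p).SupportedInRow a := fun α β hα => by
  by_cases h : p α β
  · rw [restrictEntries_apply_of_pos h, hN α β hα]
  · exact restrictEntries_apply_of_neg h

lemma SupportedInCol.restrictEntries {b : κ} (hN : N.SupportedInCol b) :
    (N.restrictEntries p).SupportedInCol b := fun α β hβ => by
  by_cases h : p α β
  · rw [restrictEntries_apply_of_pos h, hN α β hβ]
  · exact restrictEntries_apply_of_neg h

end Support

section Ring

variable [Ring A]

lemma SupportedInRow.mul_eq_zero [Fintype ι] {X Y : Matrix ι ι A} {a : ι}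
    (hX : X.SupportedInRow a) (hY : Y.SupportedInRow a) (hXa : X a a = 0) : X * Y = 0 := by
  ext α β
  rw [mul_apply, Finset.sum_eq_single a (fun k _ hk => by rw [hY k β hk, mul_zero])
    (by simp), zero_apply]
  by_cases hα : α = a
  · rw [hα, hXa, zero_mul]
  · rw [hX α a hα, zero_mul]

lemma SupportedInCol.mul_eq_zero [Fintype ι] {X Y : Matrix ι ι A} {a : ι}
    (hX : X.SupportedInCol a) (hY : Y.SupportedInCol a) (hYa : Y a a = 0) : X * Y = 0 := by
  ext α β
  rw [mul_apply, Finset.sum_eq_single a (fun k _ hk => by rw [hX α k hk, zero_mul])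
    (by simp), zero_apply]
  by_cases hβ : β = a
  · rw [hβ, hYa, mul_zero]
  · rw [hY a β hβ, mul_zero]

lemma SupportedInRow.add {X Y : Matrix ι κ A} {a : ι} (hX : X.SupportedInRow a)
    (hY : Y.SupportedInRow a) : (X + Y).SupportedInRow a := fun α β hα => by
  rw [add_apply, hX α β hα, hY α β hα, add_zero]

lemma SupportedInCol.add {X Y : Matrix ι κ A} {b : κ} (hX : X.SupportedInCol b)
    (hY : Y.SupportedInCol b) : (X + Y).SupportedInCol b := fun α β hβ => by
  rw [add_apply, hX α β hβ, hY α β hβ, add_zero]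

variable [DecidableEq ι] [DecidableEq κ]

lemma supportedInRow_single_mul [Fintype κ] {μ : Type*} (i : ι) (j : κ) (c : A)
    (M : Matrix κ μ A) : (single i j c * M).SupportedInRow i :=
  fun α β hα => single_mul_apply_of_ne c i j α β hα M

lemma supportedInCol_mul_single [Fintype ι] {μ : Type*} (i : ι) (j : κ) (c : A)
    (M : Matrix μ ι A) : (M * single i j c).SupportedInCol j :=
  fun α β hβ => mul_single_apply_of_ne c i j α β hβ M

end Ring

end Matrix

lemma Elementary.eq_zero_or_exists_eq_single {ι κ A : Type*} [DecidableEq ι] [DecidableEq κ]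
    [Zero A] {P : Matrix ι κ A} (hP : Elementary P) :
    P = 0 ∨ ∃ i j c, P = Matrix.single i j c := by
  by_cases h : ∃ i j, P i j ≠ 0
  · obtain ⟨i, j, hij⟩ := h
    refine Or.inr ⟨i, j, P i j, Matrix.ext fun α β => ?_⟩
    by_cases hαβ : P α β = 0
    · rw [hαβ, Matrix.single_apply, eq_comm, ite_eq_right_iff]
      rintro ⟨rfl, rfl⟩
      exact hαβ
    · obtain ⟨rfl, rfl⟩ := hP α β i j hαβ hij
      rw [Matrix.single_apply_same]
  · simp only [not_exists, not_not] at h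
    exact Or.inl (Matrix.ext h)

lemma Equiv.Perm.exists_apply_ne_self_notMem {κ : Type*} [Fintype κ] [DecidableEq κ]
    {σ : Equiv.Perm κ} (hσ : σ ≠ 1) {s : Set κ} (hs : s.Subsingleton) :
    ∃ i, σ i ≠ i ∧ i ∉ s := by
  have hcard := Equiv.Perm.two_le_card_support_of_ne_one hσ
  obtain ⟨i, hi⟩ := Finset.card_pos.mp (by omega : 0 < σ.support.card)
  by_cases his : i ∈ s
  · obtain ⟨j, hj, hji⟩ := Finset.exists_mem_ne (by omega : 1 < σ.support.card) i
    exact ⟨j, Equiv.Perm.mem_support.mp hj, fun hjs => hji (hs hjs his)⟩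
  · exact ⟨i, Equiv.Perm.mem_support.mp hi, his⟩

lemma List.prod_map_eq_apply_of_forall_ne {ι M : Type*} [Monoid M] [DecidableEq ι]
    {l : List ι} (hl : l.Nodup) {a : ι} (ha : a ∈ l) (f : ι → M)
    (hf : ∀ x ∈ l, x ≠ a → f x = 1) : (l.map f).prod = f a := by
  rw [List.prod_map_eq_pow_single a f fun x hx hxl => hf x hxl hx,
    List.count_eq_one_of_mem hl ha, pow_one]

lemma listDet_eq_prod_diag {κ A : Type*} [Fintype κ] [LinearOrder κ] [Ring A] (M : Matrix κ κ A)
    (h : ∀ σ : Equiv.Perm κ, σ ≠ 1 → ∃ i, M (σ i) i = 0) :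
    listDet M = ((Finset.sort Finset.univ (· ≤ ·)).map fun i => M i i).prod := by
  unfold listDet
  rw [Finset.sum_eq_single 1 (fun σ _ hσ => ?_) (by simp)]
  · simp
  · obtain ⟨i, hi⟩ := h σ hσ
    rw [List.prod_eq_zero, smul_zero]
    exact List.mem_map.mpr ⟨i, (Finset.mem_sort _).mpr (Finset.mem_univ i), hi⟩

section DetProd

variable {n : ℕ} (lo : LinearOrder (Gamma n)) {ι A : Type*} [Fintype ι] [LinearOrder ι] [Ring A]
  (w : ι → Gamma n) {N : Matrix ι ι A} {a : ι}

lemma detProd_one_add_of_perm_entry_eq_zero (hdiag : ∀ α, α ≠ a → N α α = 0)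
    (hperm : ∀ γ (σ : Equiv.Perm {α // w α = γ}), σ ≠ 1 → ∃ i, σ i ≠ i ∧ N (σ i).1 i.1 = 0) :
    detProd lo w (1 + N) = 1 + N a a := by
  have hblock : ∀ γ, listDet (of fun x y : {α // w α = γ} => (1 + N) x.1 y.1) =
      ((Finset.sort Finset.univ (· ≤ ·)).map fun x : {α // w α = γ} => 1 + N x.1 x.1).prod := by
    intro γ
    rw [listDet_eq_prod_diag]
    · simp
    · intro σ hσ
      obtain ⟨i, hσi, hi⟩ := hperm γ σ hσ
      exact ⟨i, by simp [one_apply_ne (Subtype.val_injective.ne hσi), hi]⟩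
  unfold detProd
  simp_rw [hblock]
  rw [List.prod_map_eq_apply_of_forall_ne (Finset.sort_nodup _ _)
    ((Finset.mem_sort _).mpr (Finset.mem_image_of_mem w (Finset.mem_univ a)))]
  · rw [List.prod_map_eq_apply_of_forall_ne (Finset.sort_nodup _ _)
      ((Finset.mem_sort _).mpr (Finset.mem_univ (⟨a, rfl⟩ : {α // w α = w a})))]
    intro x _ hx
    rw [hdiag x.1 (fun h => hx (Subtype.ext h)), add_zero]
  · intro γ _ hγ
    refine List.prod_eq_one fun y hy => ?_
    obtain ⟨x, _, rfl⟩ := List.mem_map.mp hy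
    rw [hdiag x.1 (fun h => hγ (by rw [← x.2, h])), add_zero]

lemma detProd_one_add_of_supportedInRow (hN : N.SupportedInRow a) :
    detProd lo w (1 + N) = 1 + N a a := by
  refine detProd_one_add_of_perm_entry_eq_zero lo w (fun α hα => hN α α hα) fun γ σ hσ => ?_
  obtain ⟨i, hσi, hi⟩ := Equiv.Perm.exists_apply_ne_self_notMem hσ
    (s := {i | (σ i).1 = a}) fun i hi j hj => σ.injective (Subtype.ext (hi.trans hj.symm))
  exact ⟨i, hσi, hN _ _ hi⟩

lemma detProd_one_add_of_supportedInCol (hN : N.SupportedInCol a) :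
    detProd lo w (1 + N) = 1 + N a a := by
  refine detProd_one_add_of_perm_entry_eq_zero lo w (fun α hα => hN α α hα) fun γ σ hσ => ?_
  obtain ⟨i, hσi, hi⟩ := Equiv.Perm.exists_apply_ne_self_notMem hσ
    (s := {i | i.1 = a}) fun i hi j hj => Subtype.ext (hi.trans hj.symm)
  exact ⟨i, hσi, hN _ _ hi⟩

end DetProd

lemma Matrix.restrictEntries_trichotomy {μ ι A : Type*} (lo : LinearOrder μ) [AddZeroClass A]
    (w : ι → μ) (N : Matrix ι ι A) :
    N.restrictEntries (fun α β => lo.lt (w β) (w α)) +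
      N.restrictEntries (fun α β => lo.lt (w α) (w β)) +
      N.restrictEntries (fun α β => w α = w β) = N := by
  let _ := lo
  ext α β
  simp only [add_apply, restrictEntries, of_apply]
  rcases lt_trichotomy (w α) (w β) with h | h | h
  · simp [h, h.asymm, h.ne]
  · simp [h]
  · simp [h, h.asymm, h.ne']

section Graded

variable {n : ℕ} {K A : Type*} [Field K] [Ring A] [Algebra K A] {𝒜 : Gamma n → Submodule K A}

lemma GradedComm.mul_comm_of_even (hcomm : GradedComm 𝒜) {γ : Gamma n} (hγ : GammaEven γ)
    {a b : A} (ha : a ∈ 𝒜 γ) (hb : b ∈ 𝒜 γ) : b * a = a * b := by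
  rw [hcomm γ γ a b ha hb, gsign_self_of_even hγ, one_smul]

variable {ι : Type*} {w : ι → Gamma n}

lemma Mdeg0.add {X Y : Matrix ι ι A} (hX : Mdeg0 𝒜 w X) (hY : Mdeg0 𝒜 w Y) :
    Mdeg0 𝒜 w (X + Y) :=
  fun α β => add_mem (hX α β) (hY α β)

lemma Mdeg0.restrictEntries {X : Matrix ι ι A} (hX : Mdeg0 𝒜 w X) (p : ι → ι → Prop) :
    Mdeg0 𝒜 w (X.restrictEntries p) := fun α β => by
  by_cases h : p α β
  · rw [Matrix.restrictEntries_apply_of_pos h]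
    exact hX α β
  · rw [Matrix.restrictEntries_apply_of_neg h]
    exact zero_mem _

variable [SetLike.GradedMonoid 𝒜]

lemma Matrix.mul_apply_mem_add {κ μ : Type*} [Fintype κ] {u : ι → Gamma n} {v : κ → Gamma n}
    {t : μ → Gamma n} {P : Matrix ι κ A} {Q : Matrix κ μ A}
    (hP : ∀ i j, P i j ∈ 𝒜 (u i + v j)) (hQ : ∀ j k, Q j k ∈ 𝒜 (v j + t k)) (i : ι) (k : μ) :
    (P * Q) i k ∈ 𝒜 (u i + t k) :=
  Submodule.sum_mem _ fun j _ => by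
    have := SetLike.mul_mem_graded (hP i j) (hQ j k)
    rwa [add_assoc, ← add_assoc (v j), ZModModule.add_self, zero_add] at this

lemma Mdeg0.one [DecidableEq ι] : Mdeg0 𝒜 w (1 : Matrix ι ι A) := fun α β => by
  rw [one_apply]
  split_ifs with h
  · rw [h, ZModModule.add_self]
    exact SetLike.one_mem_graded 𝒜
  · exact zero_mem _

lemma Mdeg0.mul [Fintype ι] {X Y : Matrix ι ι A} (hX : Mdeg0 𝒜 w X) (hY : Mdeg0 𝒜 w Y) :
    Mdeg0 𝒜 w (X * Y) :=
  Matrix.mul_apply_mem_add hX hY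

end Graded

namespace DetAxioms

variable {n : ℕ} {K A : Type*} [Field K] [Ring A] [Algebra K A] {𝒜 : Gamma n → Submodule K A}
  [SetLike.GradedMonoid 𝒜] {lo : LinearOrder (Gamma n)} {ι : Type*} [Fintype ι] [LinearOrder ι]
  {w : ι → Gamma n} {D : Matrix ι ι A → A} {N : Matrix ι ι A}

lemma apply_one (hD : DetAxioms 𝒜 lo w D) : D 1 = 1 := by
  let _ := lo
  exact hD.2.2.2 1 Mdeg0.one (fun _ _ _ => one_apply)
    (Or.inl fun α β h => one_apply_ne (ne_of_apply_ne w h.ne))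

lemma apply_one_add_lower (hD : DetAxioms 𝒜 lo w D) (hN : Mdeg0 𝒜 w N) :
    D (1 + N.restrictEntries fun α β => lo.lt (w β) (w α)) = 1 := by
  let _ := lo
  refine hD.2.2.2 _ (Mdeg0.one.add (hN.restrictEntries _)) (fun α β h => ?_)
    (Or.inl fun α β h => ?_)
  · simp [restrictEntries, h, one_apply]
  · simp [restrictEntries, h.asymm, one_apply_ne (ne_of_apply_ne w h.ne)]

lemma apply_one_add_upper (hD : DetAxioms 𝒜 lo w D) (hN : Mdeg0 𝒜 w N) :
    D (1 + N.restrictEntries fun α β => lo.lt (w α) (w β)) = 1 := by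
  let _ := lo
  refine hD.2.2.2 _ (Mdeg0.one.add (hN.restrictEntries _)) (fun α β h => ?_)
    (Or.inr fun α β h => ?_)
  · simp [restrictEntries, h, one_apply]
  · simp [restrictEntries, h.asymm, one_apply_ne (ne_of_apply_ne w h.ne')]

lemma apply_one_add_diag (hD : DetAxioms 𝒜 lo w D) (hN : Mdeg0 𝒜 w N) :
    D (1 + N.restrictEntries fun α β => w α = w β) =
      detProd lo w (1 + N.restrictEntries fun α β => w α = w β) :=
  hD.2.2.1 _ (Mdeg0.one.add (hN.restrictEntries _)) fun α β h => by
    simp [restrictEntries, h, one_apply_ne (ne_of_apply_ne w h)]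

lemma apply_one_add_of_supportedInRow (hD : DetAxioms 𝒜 lo w D) (hN : Mdeg0 𝒜 w N) {a : ι}
    (hrow : N.SupportedInRow a) : D (1 + N) = 1 + N a a := by
  let _ := lo
  set L := N.restrictEntries fun α β => lo.lt (w β) (w α)
  set U := N.restrictEntries fun α β => lo.lt (w α) (w β)
  set E := N.restrictEntries fun α β => w α = w β
  have hLU : L * U = 0 := hrow.restrictEntries.mul_eq_zero hrow.restrictEntries
    (restrictEntries_apply_of_neg (lt_irrefl _))
  have hLUE : (L + U) * E = 0 :=
    (hrow.restrictEntries.add hrow.restrictEntries).mul_eq_zero hrow.restrictEntries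
      (by simp [restrictEntries])
  have hL := Mdeg0.one.add (hN.restrictEntries fun α β => lo.lt (w β) (w α))
  have hU := Mdeg0.one.add (hN.restrictEntries fun α β => lo.lt (w α) (w β))
  have hE := Mdeg0.one.add (hN.restrictEntries fun α β => w α = w β)
  calc D (1 + N) = D ((1 + L) * (1 + U) * (1 + E)) := by
        rw [one_add_mul_one_add_of_mul_eq_zero hLU, one_add_mul_one_add_of_mul_eq_zero hLUE,
          restrictEntries_trichotomy]
    _ = D (1 + L) * D (1 + U) * D (1 + E) := by
        rw [hD.2.1 _ _ (hL.mul hU) hE, hD.2.1 _ _ hL hU]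
    _ = 1 + N a a := by
        rw [hD.apply_one_add_lower hN, hD.apply_one_add_upper hN, hD.apply_one_add_diag hN,
          detProd_one_add_of_supportedInRow lo w hrow.restrictEntries,
          restrictEntries_apply_of_pos (p := fun α β => w α = w β) rfl, one_mul, one_mul]

lemma apply_one_add_of_supportedInCol (hD : DetAxioms 𝒜 lo w D) (hN : Mdeg0 𝒜 w N) {a : ι}
    (hcol : N.SupportedInCol a) : D (1 + N) = 1 + N a a := by
  let _ := lo
  set L := N.restrictEntries fun α β => lo.lt (w β) (w α)
  set U := N.restrictEntries fun α β => lo.lt (w α) (w β)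
  set E := N.restrictEntries fun α β => w α = w β
  have hEL : E * L = 0 := hcol.restrictEntries.mul_eq_zero hcol.restrictEntries
    (restrictEntries_apply_of_neg (lt_irrefl _))
  have hELU : (E + L) * U = 0 :=
    (hcol.restrictEntries.add hcol.restrictEntries).mul_eq_zero hcol.restrictEntries
      (restrictEntries_apply_of_neg (lt_irrefl _))
  have hL := Mdeg0.one.add (hN.restrictEntries fun α β => lo.lt (w β) (w α))
  have hU := Mdeg0.one.add (hN.restrictEntries fun α β => lo.lt (w α) (w β))
  have hE := Mdeg0.one.add (hN.restrictEntries fun α β => w α = w β)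
  calc D (1 + N) = D ((1 + E) * (1 + L) * (1 + U)) := by
        rw [one_add_mul_one_add_of_mul_eq_zero hEL, one_add_mul_one_add_of_mul_eq_zero hELU,
          add_assoc E, add_comm E, restrictEntries_trichotomy]
    _ = D (1 + E) * D (1 + L) * D (1 + U) := by
        rw [hD.2.1 _ _ (hE.mul hL) hU, hD.2.1 _ _ hE hL]
    _ = 1 + N a a := by
        rw [hD.apply_one_add_lower hN, hD.apply_one_add_upper hN, hD.apply_one_add_diag hN,
          detProd_one_add_of_supportedInCol lo w hcol.restrictEntries,
          restrictEntries_apply_of_pos (p := fun α β => w α = w β) rfl, mul_one, mul_one]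

end DetAxioms

theorem graded_det_elementary_even_general {n N₁ N₂ : ℕ}
    {K A : Type*} [Field K] [Ring A] [Algebra K A]
    (𝒜 : Gamma n → Submodule K A) [GradedAlgebra 𝒜] (hcomm : GradedComm 𝒜)
    (u : Fin N₁ → Gamma n) (hu : ∀ α, GammaEven (u α))
    (v : Fin N₂ → Gamma n) (hv : ∀ j, GammaEven (v j))
    (lo : LinearOrder (Gamma n))
    (Du : Matrix (Fin N₁) (Fin N₁) A → A) (hDu : DetAxioms 𝒜 lo u Du)
    (Dv : Matrix (Fin N₂) (Fin N₂) A → A) (hDv : DetAxioms 𝒜 lo v Dv)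
    (P : Matrix (Fin N₁) (Fin N₂) A) (hP : ∀ α j, P α j ∈ 𝒜 (u α + v j))
    (Q : Matrix (Fin N₂) (Fin N₁) A) (hQ : ∀ j α, Q j α ∈ 𝒜 (v j + u α))
    (hel : Elementary P ∨ Elementary Q) :
    Mdeg0 𝒜 u (1 + P * Q) ∧ Mdeg0 𝒜 v (1 + Q * P) ∧
      Du (1 + P * Q) = Dv (1 + Q * P) := by
  have hPQ : Mdeg0 𝒜 u (P * Q) := Matrix.mul_apply_mem_add hP hQ
  have hQP : Mdeg0 𝒜 v (Q * P) := Matrix.mul_apply_mem_add hQ hP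
  have hswap : ∀ α j, Q j α * P α j = P α j * Q j α := fun α j =>
    hcomm.mul_comm_of_even ((hu α).add (hv j)) (hP α j) (add_comm (v j) (u α) ▸ hQ j α)
  refine ⟨Mdeg0.one.add hPQ, Mdeg0.one.add hQP, ?_⟩
  rcases hel with hel | hel
  · obtain h0 | ⟨α0, j0, c, rfl⟩ := hel.eq_zero_or_exists_eq_single
    · simp [h0, hDu.apply_one, hDv.apply_one]
    · rw [hDu.apply_one_add_of_supportedInRow hPQ (supportedInRow_single_mul α0 j0 c Q),
        hDv.apply_one_add_of_supportedInCol hQP (supportedInCol_mul_single α0 j0 c Q),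
        single_mul_apply_same, mul_single_apply_same]
      simpa using (hswap α0 j0).symm
  · obtain h0 | ⟨j0, α0, c, rfl⟩ := hel.eq_zero_or_exists_eq_single
    · simp [h0, hDu.apply_one, hDv.apply_one]
    · rw [hDu.apply_one_add_of_supportedInCol hPQ (supportedInCol_mul_single j0 α0 c P),
        hDv.apply_one_add_of_supportedInRow hQP (supportedInRow_single_mul j0 α0 c P),
        mul_single_apply_same, single_mul_apply_same]
      simpa using (hswap α0 j0).symm

/-- **Determinant identity for elementary off-diagonal blocks, even case** (Lemma).
With `u`, `v` even-valued weight maps and `P`, `Q` graded rectangular blocks one of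
which is elementary, `1 + P Q` and `1 + Q P` are degree-zero graded matrices and
`D_u(1 + P Q) = D_v(1 + Q P)`. -/
theorem graded_det_elementary_even {n N₁ N₂ : ℕ} (hn : 1 ≤ n) (hN₁ : 1 ≤ N₁) (hN₂ : 1 ≤ N₂)
    {K A : Type*} [Field K] [CharZero K] [Ring A] [Algebra K A]
    (𝒜 : Gamma n → Submodule K A) [GradedAlgebra 𝒜] (hcomm : GradedComm 𝒜)
    (u : Fin N₁ → Gamma n) (hu : ∀ α, GammaEven (u α))
    (v : Fin N₂ → Gamma n) (hv : ∀ j, GammaEven (v j))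
    (lo : LinearOrder (Gamma n))
    (Du : Matrix (Fin N₁) (Fin N₁) A → A) (hDu : DetAxioms 𝒜 lo u Du)
    (Dv : Matrix (Fin N₂) (Fin N₂) A → A) (hDv : DetAxioms 𝒜 lo v Dv)
    (P : Matrix (Fin N₁) (Fin N₂) A) (hP : ∀ α j, P α j ∈ 𝒜 (u α + v j))
    (Q : Matrix (Fin N₂) (Fin N₁) A) (hQ : ∀ j α, Q j α ∈ 𝒜 (v j + u α))
    (hel : Elementary P ∨ Elementary Q) :
    Mdeg0 𝒜 u (1 + P * Q) ∧ Mdeg0 𝒜 v (1 + Q * P) ∧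
      Du (1 + P * Q) = Dv (1 + Q * P) :=
  graded_det_elementary_even_general 𝒜 hcomm u hu v hv lo Du hDu Dv hDv P hP Q hQ hel
end

section
/- Criterion for existence of a block UDL decomposition (Proposition): Let R be an associative unital ring (not necessarily commutative), p, N ≥ 1, b : Fin N → Fin p a block-assignment map, and X : Matrix (Fin N) (Fin N) R an invertible matrix. Then X admits a block UDL decomposition X = U * D * L, with U block-upper-unitriangular, D block-diagonal and L block-lower-unitriangular with respect to b, if and only if for every k : Fin p the square submatrix of X on the index set {α | k ≤ b α} is an invertible matrix over R (for k = 0 this is the hypothesis that X itself is invertible; the remaining conditions say that all trailing principal block submatrices X^{1…k,1…k} are invertible). -/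
/-!
A block unitriangular matrix is `1 + W` with `W` strictly block triangular, hence nilpotent, so it
is a unit. Given `X = U * D * L`, the factor `D` is therefore a unit, and since `U` is block upper
and `L` block lower triangular, restricting to the trailing indices `{α | k ≤ b α}` is
multiplicative on `U * D * L`: the trailing block of `X` is a product of three units.

Conversely, induct on the number of indices. Split off the first block; the complementary trailing
block `E` of `X` is invertible, and the Schur complement factorization reduces a block UDL
decomposition of `X` to one of `E`, whose trailing blocks are trailing blocks of `X`. The induction
is run with the strict trailing blocks `{α | k < b α}`, which are empty or of the form
`{α | k' ≤ b α}`.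
-/

open Matrix

/-- `U` is block-upper-unitriangular with respect to the block assignment `b`. -/
def BlockUpperUni {R : Type*} [Zero R] [One R] {p N : ℕ} (b : Fin N → Fin p)
    (U : Matrix (Fin N) (Fin N) R) : Prop :=
  (∀ α β, b β < b α → U α β = 0) ∧
  (∀ α β, b α = b β → U α β = if α = β then 1 else 0)

/-- `L` is block-lower-unitriangular with respect to the block assignment `b`. -/
def BlockLowerUni {R : Type*} [Zero R] [One R] {p N : ℕ} (b : Fin N → Fin p)
    (L : Matrix (Fin N) (Fin N) R) : Prop :=
  (∀ α β, b α < b β → L α β = 0) ∧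
  (∀ α β, b α = b β → L α β = if α = β then 1 else 0)

/-- `D` is block-diagonal with respect to the block assignment `b`. -/
def BlockDiag {R : Type*} [Zero R] {p N : ℕ} (b : Fin N → Fin p)
    (D : Matrix (Fin N) (Fin N) R) : Prop :=
  ∀ α β, b α ≠ b β → D α β = 0

namespace Matrix

open Finset OrderDual

variable {ι κ β R : Type*}

def IsBlockDiagonal [Zero R] (b : ι → β) (M : Matrix ι ι R) : Prop :=
  ∀ i j, b i ≠ b j → M i j = 0

lemma IsBlockDiagonal.submatrix [Zero R] {b : ι → β} {M : Matrix ι ι R}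
    (h : IsBlockDiagonal b M) (f : κ → ι) : IsBlockDiagonal (b ∘ f) (M.submatrix f f) :=
  fun i j hij => h (f i) (f j) hij

lemma IsBlockDiagonal.fromBlocks [Zero R] {b : κ ⊕ ι → β} {A : Matrix κ κ R} {D : Matrix ι ι R}
    (hA : IsBlockDiagonal (b ∘ Sum.inl) A) (hD : IsBlockDiagonal (b ∘ Sum.inr) D) :
    IsBlockDiagonal b (fromBlocks A 0 0 D) := by
  rintro (i | i) (j | j) hij
  exacts [hA i j hij, rfl, rfl, hD i j hij]

variable [LinearOrder β]

def IsBlockUnitriangular [DecidableEq ι] [Zero R] [One R] (b : ι → β) (M : Matrix ι ι R) :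
    Prop :=
  M.BlockTriangular b ∧ ∀ i j, b i = b j → M i j = (1 : Matrix ι ι R) i j

/-- The lower factor is block unitriangular for the reversed order on the blocks. -/
def HasBlockUDL [Fintype ι] [DecidableEq ι] [Semiring R] (b : ι → β) (X : Matrix ι ι R) :
    Prop :=
  ∃ U D L, IsBlockUnitriangular b U ∧ IsBlockDiagonal b D ∧
    IsBlockUnitriangular (toDual ∘ b) L ∧ X = U * D * L

section Structure

variable [Zero R]

lemma IsBlockDiagonal.blockTriangular {b : ι → β} {M : Matrix ι ι R} (h : IsBlockDiagonal b M) :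
    M.BlockTriangular b :=
  fun i j hij => h i j hij.ne'

lemma IsBlockDiagonal.blockTriangular_toDual {b : ι → β} {M : Matrix ι ι R}
    (h : IsBlockDiagonal b M) : M.BlockTriangular (toDual ∘ b) :=
  fun i j (hij : b i < b j) => h i j hij.ne

variable [One R] [DecidableEq ι] [DecidableEq κ]

lemma isBlockUnitriangular_one (b : ι → β) : IsBlockUnitriangular b (1 : Matrix ι ι R) :=
  ⟨blockTriangular_one, fun _ _ _ => rfl⟩

lemma IsBlockUnitriangular.submatrix {b : ι → β} {M : Matrix ι ι R}
    (h : IsBlockUnitriangular b M) {f : κ → ι} (hf : f.Injective) :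
    IsBlockUnitriangular (b ∘ f) (M.submatrix f f) := by
  refine ⟨h.1.submatrix, fun i j hij => ?_⟩
  rw [← submatrix_one f hf]
  exact h.2 (f i) (f j) hij

lemma IsBlockUnitriangular.fromBlocks {b : κ ⊕ ι → β} {A : Matrix κ κ R} {B : Matrix κ ι R}
    {C : Matrix ι κ R} {D : Matrix ι ι R}
    (hA : IsBlockUnitriangular (b ∘ Sum.inl) A) (hD : IsBlockUnitriangular (b ∘ Sum.inr) D)
    (hB : ∀ i j, b (.inr j) < b (.inl i) → B i j = 0)
    (hC : ∀ i j, b (.inl j) < b (.inr i) → C i j = 0)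
    (hne : ∀ i j, b (.inl i) ≠ b (.inr j)) :
    IsBlockUnitriangular b (fromBlocks A B C D) := by
  refine ⟨?_, ?_⟩
  · rintro (i | i) (j | j) hij
    exacts [hA.1 hij, hB i j hij, hC i j hij, hD.1 hij]
  · rw [← fromBlocks_one]
    rintro (i | i) (j | j) hij
    exacts [hA.2 i j hij, absurd hij (hne i j), absurd hij.symm (hne j i), hD.2 i j hij]

end Structure

section Nilpotent

variable [Fintype ι] [DecidableEq ι] [Ring R]

lemma isNilpotent_of_forall_le_imp_apply_eq_zero (b : ι → β) {W : Matrix ι ι R}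
    (hW : ∀ i j, b j ≤ b i → W i j = 0) : IsNilpotent W := by
  let rank : ι → ℕ := fun i => #{j | b j < b i}
  have rank_lt {i j : ι} (h : b i < b j) : rank i < rank j := by
    refine card_lt_card ((ssubset_iff_of_subset fun l hl => ?_).2 ⟨i, ?_, ?_⟩) <;>
      simp_all only [mem_filter, mem_univ, true_and, lt_irrefl, not_false_eq_true]
    exact hl.trans h
  have pow_apply : ∀ n i j, rank j < rank i + n → (W ^ n) i j = 0 := by
    intro n
    induction n with
    | zero =>
      intro i j h
      exact one_apply_ne (by rintro rfl; omega)
    | succ n ih =>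
      intro i j h
      rw [pow_succ, mul_apply]
      refine sum_eq_zero fun l _ => ?_
      rcases le_or_gt (b j) (b l) with hl | hl
      · rw [hW l j hl, mul_zero]
      · rw [ih i l (by have := rank_lt hl; omega), zero_mul]
  refine ⟨Fintype.card ι, ext fun i j => pow_apply _ _ _ ?_⟩
  have : rank j < Fintype.card ι := card_lt_univ_of_notMem (x := j) (by simp)
  omega

lemma IsBlockUnitriangular.isUnit {b : ι → β} {U : Matrix ι ι R} (h : IsBlockUnitriangular b U) :
    IsUnit U := by
  rw [← add_sub_cancel 1 U]
  refine (isNilpotent_of_forall_le_imp_apply_eq_zero b fun i j hij => ?_).isUnit_one_add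
  rcases hij.lt_or_eq with hlt | heq
  · rw [sub_apply, h.1 hlt, one_apply_ne (by rintro rfl; exact lt_irrefl _ hlt), sub_zero]
  · rw [sub_apply, h.2 i j heq.symm, sub_self]

end Nilpotent

section TrailingBlocks

variable [Fintype ι] [NonUnitalNonAssocSemiring R]

lemma toBlock_mul_eq_mul_of_forall (p : ι → Prop) [DecidablePred p] (A B : Matrix ι ι R)
    (h : ∀ i j l, p i → p j → ¬ p l → A i l * B l j = 0) :
    (A * B).toBlock p p = A.toBlock p p * B.toBlock p p := by
  ext i j
  rw [toBlock_apply, mul_apply, ← Fintype.sum_subtype_add_sum_subtype p,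
    Fintype.sum_eq_zero _ fun l : {l // ¬ p l} => h i j l i.2 j.2 l.2, add_zero]
  rfl

variable {b : ι → β} (k : β)

lemma BlockTriangular.toBlock_mul_left {A : Matrix ι ι R} (hA : A.BlockTriangular b)
    (B : Matrix ι ι R) : (A * B).toBlock (k ≤ b ·) (k ≤ b ·) =
      A.toBlock (k ≤ b ·) (k ≤ b ·) * B.toBlock (k ≤ b ·) (k ≤ b ·) :=
  toBlock_mul_eq_mul_of_forall _ A B fun _ _ _ hi _ hl => by
    rw [hA ((not_le.1 hl).trans_le hi), zero_mul]

lemma BlockTriangular.toBlock_mul_right (A : Matrix ι ι R) {B : Matrix ι ι R}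
    (hB : B.BlockTriangular (toDual ∘ b)) : (A * B).toBlock (k ≤ b ·) (k ≤ b ·) =
      A.toBlock (k ≤ b ·) (k ≤ b ·) * B.toBlock (k ≤ b ·) (k ≤ b ·) :=
  toBlock_mul_eq_mul_of_forall _ A B fun _ _ _ _ hj hl => by
    rw [hB ((not_le.1 hl).trans_le hj), mul_zero]

end TrailingBlocks

section Necessity

variable [Fintype ι] [DecidableEq ι] {b : ι → β} (k : β)

lemma IsBlockDiagonal.isUnit_toBlock [Semiring R] {D : Matrix ι ι R} (hD : IsBlockDiagonal b D)
    (hu : IsUnit D) : IsUnit (D.toBlock (k ≤ b ·) (k ≤ b ·)) := by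
  refine ⟨⟨D.toBlock (k ≤ b ·) (k ≤ b ·),
    (↑hu.unit⁻¹ : Matrix ι ι R).toBlock (k ≤ b ·) (k ≤ b ·), ?_, ?_⟩, rfl⟩
  · rw [← hD.blockTriangular.toBlock_mul_left, hu.mul_val_inv, toBlock_one_self]
  · rw [← hD.blockTriangular_toDual.toBlock_mul_right, hu.val_inv_mul, toBlock_one_self]

lemma HasBlockUDL.isUnit_toBlock [Ring R] {X : Matrix ι ι R} (h : HasBlockUDL b X)
    (hX : IsUnit X) : IsUnit (X.toBlock (k ≤ b ·) (k ≤ b ·)) := by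
  obtain ⟨U, D, L, hU, hD, hL, rfl⟩ := h
  have hD' : IsUnit D := hU.isUnit.mul_left_iff.1 (hL.isUnit.mul_right_iff.1 hX)
  rw [mul_assoc, hU.1.toBlock_mul_left, hD.blockTriangular.toBlock_mul_left]
  exact (hU.submatrix Subtype.val_injective).isUnit.mul
    ((hD.isUnit_toBlock k hD').mul (hL.submatrix Subtype.val_injective).isUnit)

end Necessity

section Existence

variable [Fintype ι] [DecidableEq ι]

lemma HasBlockUDL.of_submatrix [Semiring R] [Fintype κ] [DecidableEq κ] {b : ι → β}
    {X : Matrix ι ι R} (e : κ ≃ ι) (h : HasBlockUDL (b ∘ e) (X.submatrix e e)) :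
    HasBlockUDL b X := by
  obtain ⟨U, D, L, hU, hD, hL, hX⟩ := h
  have hb : (b ∘ e) ∘ e.symm = b := by ext; simp
  refine ⟨U.submatrix e.symm e.symm, D.submatrix e.symm e.symm, L.submatrix e.symm e.symm,
    ?_, ?_, ?_, ?_⟩
  · rw [← hb]; exact hU.submatrix e.symm.injective
  · rw [← hb]; exact hD.submatrix e.symm
  · rw [← hb]; exact hL.submatrix e.symm.injective
  · rw [submatrix_mul_equiv, submatrix_mul_equiv, ← hX, submatrix_submatrix,
      Equiv.self_comp_symm, submatrix_id_id]

variable [Ring R]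

/-- The witnesses come from the Schur complement factorization
`[[A, B], [C, E]] = [[1, B E'], [0, 1]] * [[A - B E' C, 0], [0, E]] * [[1, 0], [E' C, 1]]`
after substituting `E = U D L`. -/
lemma hasBlockUDL_fromBlocks [Fintype κ] [DecidableEq κ] {b : κ ⊕ ι → β}
    (hlt : ∀ i j, b (.inl i) < b (.inr j)) (hconst : ∀ i i', b (.inl i) = b (.inl i'))
    (A : Matrix κ κ R) (B : Matrix κ ι R) (C : Matrix ι κ R) {E E' : Matrix ι ι R}
    (hEE' : E * E' = 1) (hE'E : E' * E = 1) (hE : HasBlockUDL (b ∘ Sum.inr) E) :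
    HasBlockUDL b (fromBlocks A B C E) := by
  obtain ⟨U, D, L, hU, hD, hL, rfl⟩ := hE
  refine ⟨fromBlocks 1 (B * E' * U) 0 U, fromBlocks (A - B * E' * C) 0 0 D,
    fromBlocks 1 0 (L * E' * C) L, ?_, ?_, ?_, ?_⟩
  · exact (isBlockUnitriangular_one _).fromBlocks hU (fun i j h => absurd h (hlt i j).not_gt)
      (fun _ _ _ => rfl) fun i j => (hlt i j).ne
  · exact IsBlockDiagonal.fromBlocks (fun i i' h => absurd (hconst i i') h) hD
  · exact (isBlockUnitriangular_one _).fromBlocks hL (fun _ _ _ => rfl)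
      (fun i j h => absurd h (hlt j i).not_gt) fun i j => (hlt i j).ne
  · have hE (M : Matrix ι κ R) : U * (D * (L * (E' * M))) = M := by
      simp only [← Matrix.mul_assoc, hEE', Matrix.one_mul]
    have hE' (M : Matrix κ ι R) : M * (E' * (U * (D * L))) = M := by
      rw [← Matrix.mul_assoc U, hE'E, Matrix.mul_one]
    simp only [fromBlocks_multiply, Matrix.mul_one, Matrix.one_mul, Matrix.mul_zero,
      Matrix.zero_mul, add_zero, zero_add, Matrix.mul_assoc, hE, hE', sub_add_cancel]

theorem hasBlockUDL_of_forall_isUnit_toBlock_lt (b : ι → β) (X : Matrix ι ι R)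
    (hX : ∀ k, IsUnit (X.toBlock (k < b ·) (k < b ·))) : HasBlockUDL b X := by
  induction hn : Fintype.card ι using Nat.strong_induction_on generalizing ι with
  | _ n ih =>
  rcases isEmpty_or_nonempty ι with hι | hι
  · exact ⟨1, 1, 1, isBlockUnitriangular_one b, fun i => isEmptyElim i,
      isBlockUnitriangular_one _, Subsingleton.elim _ _⟩
  obtain ⟨i₀, hi₀⟩ := Finite.exists_min b
  let P : ι → Prop := (b i₀ < b ·)
  have hfirst (j : ι) (hj : ¬ P j) : b j = b i₀ := le_antisymm (not_lt.1 hj) (hi₀ j)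
  have hE : HasBlockUDL (b ∘ Subtype.val) (X.toBlock P P) := by
    refine ih _ (hn ▸ Fintype.card_subtype_lt (lt_irrefl (b i₀))) _ _ (fun k => ?_) rfl
    -- the trailing blocks of `X.toBlock P P` are trailing blocks of `X`
    let e : {j : {j // P j} // k < b j} ≃ {j // max (b i₀) k < b j} :=
      ⟨fun j => ⟨j.1.1, max_lt j.1.2 j.2⟩,
        fun j => ⟨⟨j.1, (max_lt_iff.1 j.2).1⟩, (max_lt_iff.1 j.2).2⟩, fun _ => rfl, fun _ => rfl⟩
    exact (hX _).map (reindexRingEquiv R e.symm)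
  let σ : {j // ¬ P j} ⊕ {j // P j} ≃ ι := (Equiv.sumComm _ _).trans (Equiv.sumCompl P)
  refine HasBlockUDL.of_submatrix σ ?_
  rw [← fromBlocks_toBlocks (X.submatrix σ σ)]
  exact hasBlockUDL_fromBlocks (b := b ∘ σ) (fun i j => (not_lt.1 i.2).trans_lt j.2)
    (fun i i' => (hfirst i i.2).trans (hfirst i' i'.2).symm)
    _ _ _ (hX (b i₀)).mul_val_inv (hX (b i₀)).val_inv_mul hE

lemma isUnit_toBlock_lt_of_forall_isUnit_toBlock_le (b : ι → β) {X : Matrix ι ι R}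
    (hX : ∀ k, IsUnit (X.toBlock (k ≤ b ·) (k ≤ b ·))) (k : β) :
    IsUnit (X.toBlock (k < b ·) (k < b ·)) := by
  rcases isEmpty_or_nonempty {j // k < b j} with h | h
  · exact isUnit_of_subsingleton _
  obtain ⟨j₁, hmin⟩ := Finite.exists_min fun j : {j // k < b j} => b j
  let e : {j // k < b j} ≃ {j // b j₁ ≤ b j} :=
    Equiv.subtypeEquivRight fun j => ⟨fun hj => hmin ⟨j, hj⟩, j₁.2.trans_le⟩
  exact (hX _).map (reindexRingEquiv R e.symm)

theorem hasBlockUDL_iff_forall_isUnit_toBlock (b : ι → β) {X : Matrix ι ι R} (hX : IsUnit X) :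
    HasBlockUDL b X ↔ ∀ k, IsUnit (X.toBlock (k ≤ b ·) (k ≤ b ·)) :=
  ⟨fun h k => h.isUnit_toBlock k hX, fun h => hasBlockUDL_of_forall_isUnit_toBlock_lt b X
    (isUnit_toBlock_lt_of_forall_isUnit_toBlock_le b h)⟩

end Existence

end Matrix

theorem block_UDL_criterion_general {R : Type*} [Ring R] {p N : ℕ}
    (b : Fin N → Fin p) (X : Matrix (Fin N) (Fin N) R) (hX : IsUnit X) :
    (∃ U D L : Matrix (Fin N) (Fin N) R,
        BlockUpperUni b U ∧ BlockDiag b D ∧ BlockLowerUni b L ∧ X = U * D * L) ↔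
    (∀ k : Fin p, IsUnit
      (X.submatrix (fun a : {α : Fin N // k ≤ b α} => a.1)
        (fun a : {α : Fin N // k ≤ b α} => a.1))) :=
  hasBlockUDL_iff_forall_isUnit_toBlock b hX

/-- **Criterion for existence of a block UDL decomposition** (Proposition).
An invertible matrix `X` over a (not necessarily commutative) unital ring admits a block
UDL decomposition with respect to the block assignment `b` if and only if, for every
block index `k`, the square submatrix of `X` on the trailing index set `{α | k ≤ b α}`
is invertible. -/
theorem block_UDL_criterion {R : Type*} [Ring R] {p N : ℕ} (hp : 1 ≤ p) (hN : 1 ≤ N)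
    (b : Fin N → Fin p) (X : Matrix (Fin N) (Fin N) R) (hX : IsUnit X) :
    (∃ U D L : Matrix (Fin N) (Fin N) R,
        BlockUpperUni b U ∧ BlockDiag b D ∧ BlockLowerUni b L ∧ X = U * D * L) ↔
    (∀ k : Fin p, IsUnit
      (X.submatrix (fun a : {α : Fin N // k ≤ b α} => a.1)
        (fun a : {α : Fin N // k ≤ b α} => a.1))) :=
  block_UDL_criterion_general b X hX
end

section
/- Quasideterminants commute with deletion of a row and a column of the first block (Corollary): Let R be an associative unital ring, m, s ≥ 1, and let A : Matrix (Fin (m+1)) (Fin (m+1)) R, B : Matrix (Fin (m+1)) (Fin s) R, C : Matrix (Fin s) (Fin (m+1)) R, D : Matrix (Fin s) (Fin s) R with D invertible. Then for all i, j : Fin (m+1), deleting row i and column j from the Schur complement A − B * D⁻¹ * C yields the Schur complement of the block matrix with the same row and column deleted: (A − B * D⁻¹ * C).submatrix (Fin.succAbove i) (Fin.succAbove j) = A.submatrix (Fin.succAbove i) (Fin.succAbove j) − (B.submatrix (Fin.succAbove i) id) * D⁻¹ * (C.submatrix id (Fin.succAbove j)). Consequently, for any row index a ≠ i and column index b ≠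 j of the first block, the (a,b) quasideterminant of the (1,1) block quasideterminant of X = fromBlocks A B C D with row i and column j deleted exists if and only if the (a,b) quasideterminant of X with row i and column j deleted exists, and then the two quasideterminants are equal. -/
open Matrix

/-- The matrix obtained from `M` by deleting row `a` and column `b`. -/
def delMat {R ι κ : Type*} (M : Matrix ι κ R) (a : ι) (b : κ) :
    Matrix {x : ι // x ≠ a} {y : κ // y ≠ b} R :=
  M.submatrix Subtype.val Subtype.val

/-- `QdetEq M a b q` : the quasideterminant `|M|_{ab}` exists (i.e. the submatrix `M^{a,b}`
obtained by deleting row `a` and column `b` has a two-sided inverse `Ninv`) and equals `q`,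
namely `q = M a b − r_a * (M^{a,b})⁻¹ * c_b` where `r_a` is row `a` without entry `b` and
`c_b` is column `b` without entry `a`. -/
def QdetEq {R ι κ : Type*} [Ring R] [Fintype ι] [Fintype κ] [DecidableEq ι] [DecidableEq κ]
    (M : Matrix ι κ R) (a : ι) (b : κ) (q : R) : Prop :=
  ∃ Ninv : Matrix {y : κ // y ≠ b} {x : ι // x ≠ a} R,
    delMat M a b * Ninv = 1 ∧ Ninv * delMat M a b = 1 ∧
    q = M a b - ∑ c : {y : κ // y ≠ b}, ∑ r : {x : ι // x ≠ a},
      M a c.1 * Ninv c r * M r.1 b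

/-!
Deleting row `i` and column `j` of the first block commutes with forming `A - B D⁻¹ C`, since
the entries of `B D⁻¹ C` only involve the corresponding row of `B` and column of `C`.

For the quasideterminants, regard `|M|_{ab}` as the corner quasideterminant
`p - u N⁻¹ v` of the bordered matrix `[[p, u], [v, N]]` with `p = M a b` and core `N = M^{a,b}`.
It is unchanged when the core is reindexed, and multiplying the core by invertible matrices `P`,
`Q` on both sides only transforms the border by `P⁻¹` and `Q⁻¹`. Applied to the LDU factorisation
`[[A, B], [C, D]] = [[1, B D⁻¹], [0, 1]] · diag(A - B D⁻¹ C, D) · [[1, 0], [D⁻¹ C, 1]]`, this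
leaves the block-diagonal core `diag(A - B D⁻¹ C, D)`, whose `D`-part only shifts the corner by
`u₂ D⁻¹ v₂`. The resulting corner, border and core are exactly the entry, row, column and deleted
submatrix of the Schur complement.
-/

namespace Quasidet

variable {R : Type*} [Ring R]

theorem submatrix_sub_mul_mul {ι κ σ τ ι' κ' : Type*} [Fintype σ] [Fintype τ]
    (A : Matrix ι κ R) (B : Matrix ι σ R) (M : Matrix σ τ R) (C : Matrix τ κ R) (f : ι' → ι)
    (g : κ' → κ) :
    (A - B * M * C).submatrix f g = A.submatrix f g - B.submatrix f id * M * C.submatrix id g := by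
  ext x y
  simp [Matrix.mul_apply, Finset.sum_mul]

theorem delMat_sub_mul_mul {ι κ σ τ : Type*} [Fintype σ] [Fintype τ] (A : Matrix ι κ R)
    (B : Matrix ι σ R) (M : Matrix σ τ R) (C : Matrix τ κ R) (a : ι) (b : κ) :
    delMat (A - B * M * C) a b =
      delMat A a b - B.submatrix Subtype.val id * M * C.submatrix id Subtype.val :=
  submatrix_sub_mul_mul A B M C _ _

def subtypeNeInlEquiv {α β : Type*} (a : α) :
    {x : α ⊕ β // x ≠ Sum.inl a} ≃ {x // x ≠ a} ⊕ β :=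
  Equiv.subtypeSum.trans <|
    Equiv.sumCongr (Equiv.subtypeEquivRight fun _ => Sum.inl_injective.ne_iff)
      (Equiv.subtypeUnivEquiv fun _ => Sum.inr_ne_inl)

theorem delMat_fromBlocks_inl {α ι κ σ τ : Type*} (A : Matrix ι κ α) (B : Matrix ι τ α)
    (C : Matrix σ κ α) (D : Matrix σ τ α) (a : ι) (b : κ) :
    delMat (fromBlocks A B C D) (Sum.inl a) (Sum.inl b) =
      (fromBlocks (delMat A a b) (B.submatrix Subtype.val id) (C.submatrix id Subtype.val)
        D).submatrix (subtypeNeInlEquiv a) (subtypeNeInlEquiv b) := by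
  ext ⟨x | x, hx⟩ ⟨y | y, hy⟩ <;> rfl

section Blocks

variable {ι κ σ : Type*} [Fintype ι] [Fintype κ] [Fintype σ] [DecidableEq ι] [DecidableEq κ]
  [DecidableEq σ]

-- Mathlib's `Matrix.fromBlocks_eq_of_invertible₂₂` is stated over commutative rings only.
theorem fromBlocks_eq_ldu_of_invertible₂₂ (A : Matrix ι κ R) (B : Matrix ι σ R)
    (C : Matrix σ κ R) (D : Matrix σ σ R) [Invertible D] :
    fromBlocks A B C D =
      (fromBlocks 1 (B * ⅟D) 0 1 : Matrix (ι ⊕ σ) (ι ⊕ σ) R) *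
        (fromBlocks (A - B * ⅟D * C) 0 0 D : Matrix (ι ⊕ σ) (κ ⊕ σ) R) *
        (fromBlocks 1 0 (⅟D * C) 1 : Matrix (κ ⊕ σ) (κ ⊕ σ) R) := by
  simp only [fromBlocks_multiply]
  simp [Matrix.mul_assoc, Matrix.mul_invOf_cancel_left]

instance fromBlocksZero₂₁OneInvertible (X : Matrix ι σ R) :
    Invertible (fromBlocks 1 X 0 1 : Matrix (ι ⊕ σ) (ι ⊕ σ) R) :=
  ⟨fromBlocks 1 (-X) 0 1, by simp [fromBlocks_multiply], by simp [fromBlocks_multiply]⟩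

instance fromBlocksZero₁₂OneInvertible (Y : Matrix σ κ R) :
    Invertible (fromBlocks 1 0 Y 1 : Matrix (κ ⊕ σ) (κ ⊕ σ) R) :=
  ⟨fromBlocks 1 0 (-Y) 1, by simp [fromBlocks_multiply], by simp [fromBlocks_multiply]⟩

@[simp]
theorem invOf_fromBlocks_zero₂₁_one (X : Matrix ι σ R) :
    ⅟(fromBlocks 1 X 0 1 : Matrix (ι ⊕ σ) (ι ⊕ σ) R) = fromBlocks 1 (-X) 0 1 :=
  rfl

@[simp]
theorem invOf_fromBlocks_zero₁₂_one (Y : Matrix σ κ R) :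
    ⅟(fromBlocks 1 0 Y 1 : Matrix (κ ⊕ σ) (κ ⊕ σ) R) = fromBlocks 1 0 (-Y) 1 :=
  rfl

end Blocks

section Corner

variable {ι κ : Type*} [Fintype ι] [Fintype κ] [DecidableEq ι] [DecidableEq κ]

/-- `q` is the quasideterminant at the corner `p` of the bordered matrix `[[p, u], [v, N]]`. -/
def CornerQdetEq (p : R) (u : κ → R) (v : ι → R) (N : Matrix ι κ R) (q : R) : Prop :=
  ∃ Z : Matrix κ ι R, N * Z = 1 ∧ Z * N = 1 ∧ q = p - u ⬝ᵥ Z *ᵥ v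

theorem qdetEq_iff_cornerQdetEq (M : Matrix ι κ R) (a : ι) (b : κ) (q : R) :
    QdetEq M a b q ↔
      CornerQdetEq (M a b) (fun c => M a c.1) (fun r => M r.1 b) (delMat M a b) q := by
  have hsum (Z : Matrix {y // y ≠ b} {x // x ≠ a} R) :
      ∑ c, ∑ r, M a c.1 * Z c r * M r.1 b = (fun c => M a c.1) ⬝ᵥ Z *ᵥ fun r => M r.1 b := by
    simp [dotProduct, mulVec, Finset.mul_sum, mul_assoc]
  simp only [QdetEq, CornerQdetEq, hsum]

section Reindex

variable {ι' κ' : Type*} [Fintype ι'] [Fintype κ'] [DecidableEq ι'] [DecidableEq κ']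

theorem CornerQdetEq.submatrix_equiv {p : R} {u : κ → R} {v : ι → R} {N : Matrix ι κ R}
    {q : R} (h : CornerQdetEq p u v N q) (e : ι' ≃ ι) (f : κ' ≃ κ) :
    CornerQdetEq p (u ∘ f) (v ∘ e) (N.submatrix e f) q := by
  obtain ⟨Z, hNZ, hZN, rfl⟩ := h
  refine ⟨Z.submatrix f e, ?_, ?_, ?_⟩
  · rw [submatrix_mul_equiv, hNZ, submatrix_one_equiv]
  · rw [submatrix_mul_equiv, hZN, submatrix_one_equiv]
  · rw [submatrix_mulVec_equiv, Function.comp_assoc, e.self_comp_symm, Function.comp_id,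
      comp_equiv_dotProduct_comp_equiv]

theorem cornerQdetEq_submatrix_equiv_iff (e : ι' ≃ ι) (f : κ' ≃ κ) (p : R) (u : κ → R)
    (v : ι → R) (N : Matrix ι κ R) (q : R) :
    CornerQdetEq p (u ∘ f) (v ∘ e) (N.submatrix e f) q ↔ CornerQdetEq p u v N q :=
  ⟨fun h => by simpa [Function.comp_assoc] using h.submatrix_equiv e.symm f.symm,
    fun h => h.submatrix_equiv e f⟩

theorem qdetEq_submatrix_equiv_iff (N : Matrix ι κ R) (e : ι' ≃ ι) (f : κ' ≃ κ) (a : ι')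
    (b : κ') (q : R) :
    QdetEq (N.submatrix e f) a b q ↔ QdetEq N (e a) (f b) q := by
  rw [qdetEq_iff_cornerQdetEq, qdetEq_iff_cornerQdetEq]
  exact cornerQdetEq_submatrix_equiv_iff
    (e.subtypeEquiv fun _ => e.injective.ne_iff.symm : {x // x ≠ a} ≃ {y // y ≠ e a})
    (f.subtypeEquiv fun _ => f.injective.ne_iff.symm : {x // x ≠ b} ≃ {y // y ≠ f b})
    (N (e a) (f b)) (fun c => N (e a) c.1) (fun r => N r.1 (f b)) (delMat N (e a) (f b)) q

end Reindex

theorem CornerQdetEq.mul_mul {p : R} {u : κ → R} {v : ι → R} {N : Matrix ι κ R} {q : R}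
    (h : CornerQdetEq p u v N q) (P : Matrix ι ι R) (Q : Matrix κ κ R) [Invertible P]
    [Invertible Q] : CornerQdetEq p (u ᵥ* Q) (P *ᵥ v) (P * N * Q) q := by
  obtain ⟨Z, hNZ, hZN, rfl⟩ := h
  refine ⟨⅟Q * Z * ⅟P, ?_, ?_, ?_⟩
  · simp only [Matrix.mul_assoc, Matrix.mul_invOf_cancel_left]
    rw [← Matrix.mul_assoc N, hNZ, Matrix.one_mul, mul_invOf_self]
  · simp only [Matrix.mul_assoc, Matrix.invOf_mul_cancel_left]
    rw [← Matrix.mul_assoc Z, hZN, Matrix.one_mul, invOf_mul_self]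
  · simp [mulVec_mulVec, dotProduct_mulVec, vecMul_vecMul, Matrix.mul_assoc,
      Matrix.mul_invOf_cancel_left]

theorem cornerQdetEq_mul_mul_iff (P : Matrix ι ι R) (Q : Matrix κ κ R) [Invertible P]
    [Invertible Q] (p : R) (u : κ → R) (v : ι → R) (N : Matrix ι κ R) (q : R) :
    CornerQdetEq p u v (P * N * Q) q ↔ CornerQdetEq p (u ᵥ* ⅟Q) (⅟P *ᵥ v) N q :=
  ⟨fun h => by simpa [Matrix.mul_assoc, Matrix.invOf_mul_cancel_left] using h.mul_mul (⅟P) (⅟Q),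
    fun h => by simpa [vecMul_vecMul, mulVec_mulVec] using h.mul_mul P Q⟩

variable {σ : Type*} [Fintype σ] [DecidableEq σ]

theorem cornerQdetEq_fromBlocks_diagonal (E : Matrix ι κ R) (D : Matrix σ σ R) [Invertible D]
    (p : R) (u₁ : κ → R) (u₂ : σ → R) (v₁ : ι → R) (v₂ : σ → R) (q : R) :
    CornerQdetEq p (Sum.elim u₁ u₂) (Sum.elim v₁ v₂) (fromBlocks E 0 0 D) q ↔
      CornerQdetEq (p - u₂ ⬝ᵥ ⅟D *ᵥ v₂) u₁ v₁ E q := by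
  have hvalue (W : Matrix κ ι R) :
      Sum.elim u₁ u₂ ⬝ᵥ fromBlocks W 0 0 (⅟D) *ᵥ Sum.elim v₁ v₂ =
        u₁ ⬝ᵥ W *ᵥ v₁ + u₂ ⬝ᵥ ⅟D *ᵥ v₂ := by
    simp [fromBlocks_mulVec, sumElim_dotProduct_sumElim]
  have hinv {W : Matrix κ ι R} (hEW : E * W = 1) (hWE : W * E = 1) :
      fromBlocks E 0 0 D * fromBlocks W 0 0 (⅟D) = 1 ∧
        fromBlocks W 0 0 (⅟D) * fromBlocks E 0 0 D = 1 := by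
    simp [fromBlocks_multiply, hEW, hWE]
  constructor
  · rintro ⟨Z, hXZ, hZX, rfl⟩
    obtain ⟨W, Z₁₂, Z₂₁, Z₂₂, rfl⟩ : ∃ W Z₁₂ Z₂₁ Z₂₂, Z = fromBlocks W Z₁₂ Z₂₁ Z₂₂ :=
      ⟨_, _, _, _, (fromBlocks_toBlocks Z).symm⟩
    have hEW : E * W = 1 := by
      simp only [fromBlocks_multiply, Matrix.zero_mul, add_zero, zero_add, ← fromBlocks_one,
        fromBlocks_inj] at hXZ
      exact hXZ.1
    have hWE : W * E = 1 := by
      simp only [fromBlocks_multiply, Matrix.mul_zero, add_zero, zero_add, ← fromBlocks_one,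
        fromBlocks_inj] at hZX
      exact hZX.1
    have hZ : fromBlocks W Z₁₂ Z₂₁ Z₂₂ = fromBlocks W 0 0 (⅟D) :=
      calc _ = fromBlocks W Z₁₂ Z₂₁ Z₂₂ * (fromBlocks E 0 0 D * fromBlocks W 0 0 (⅟D)) := by
            rw [(hinv hEW hWE).1, Matrix.mul_one]
        _ = _ := by rw [← Matrix.mul_assoc, hZX, Matrix.one_mul]
    exact ⟨W, hEW, hWE, by rw [hZ, hvalue, sub_add_eq_sub_sub_swap]⟩
  · rintro ⟨W, hEW, hWE, rfl⟩
    exact ⟨fromBlocks W 0 0 (⅟D), (hinv hEW hWE).1, (hinv hEW hWE).2, by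
      rw [hvalue, sub_add_eq_sub_sub_swap]⟩

theorem cornerQdetEq_fromBlocks (A : Matrix ι κ R) (B : Matrix ι σ R) (C : Matrix σ κ R)
    (D : Matrix σ σ R) [Invertible D] (p : R) (u₁ : κ → R) (u₂ : σ → R) (v₁ : ι → R)
    (v₂ : σ → R) (q : R) :
    CornerQdetEq p (Sum.elim u₁ u₂) (Sum.elim v₁ v₂) (fromBlocks A B C D) q ↔
      CornerQdetEq (p - u₂ ⬝ᵥ ⅟D *ᵥ v₂) (u₁ - u₂ ᵥ* (⅟D * C)) (v₁ - (B * ⅟D) *ᵥ v₂)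
        (A - B * ⅟D * C) q := by
  have hu : Sum.elim u₁ u₂ ᵥ* ⅟(fromBlocks 1 0 (⅟D * C) 1 : Matrix (κ ⊕ σ) (κ ⊕ σ) R) =
      Sum.elim (u₁ - u₂ ᵥ* (⅟D * C)) u₂ := by
    simp [vecMul_fromBlocks, vecMul_neg, sub_eq_add_neg]
  have hv : ⅟(fromBlocks 1 (B * ⅟D) 0 1 : Matrix (ι ⊕ σ) (ι ⊕ σ) R) *ᵥ Sum.elim v₁ v₂ =
      Sum.elim (v₁ - (B * ⅟D) *ᵥ v₂) v₂ := by
    simp [fromBlocks_mulVec, neg_mulVec, sub_eq_add_neg]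
  rw [fromBlocks_eq_ldu_of_invertible₂₂, cornerQdetEq_mul_mul_iff, hu, hv,
    cornerQdetEq_fromBlocks_diagonal]

theorem qdetEq_sub_mul_invOf_mul_iff (A : Matrix ι κ R) (B : Matrix ι σ R) (C : Matrix σ κ R)
    (D : Matrix σ σ R) [Invertible D] (a : ι) (b : κ) (q : R) :
    QdetEq (A - B * ⅟D * C) a b q ↔ QdetEq (fromBlocks A B C D) (Sum.inl a) (Sum.inl b) q := by
  have hrow : (fun c => fromBlocks A B C D (Sum.inl a) c.1) =
      Sum.elim (fun c => A a c.1) (B a) ∘ subtypeNeInlEquiv b := by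
    ext ⟨y | y, hy⟩ <;> rfl
  have hcol : (fun r => fromBlocks A B C D r.1 (Sum.inl b)) =
      Sum.elim (fun r => A r.1 b) (fun t => C t b) ∘ subtypeNeInlEquiv a := by
    ext ⟨x | x, hx⟩ <;> rfl
  have hp : (A - B * ⅟D * C) a b = A a b - B a ⬝ᵥ ⅟D *ᵥ fun t => C t b := by
    simp [Matrix.mul_assoc, Matrix.mul_apply, dotProduct, mulVec]
  have hu : (fun c : {y // y ≠ b} => (A - B * ⅟D * C) a c.1) =
      (fun c => A a c.1) - B a ᵥ* (⅟D * C.submatrix id Subtype.val) := by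
    ext c
    simp [Matrix.mul_assoc, Matrix.mul_apply, vecMul, dotProduct]
  have hv : (fun r : {x // x ≠ a} => (A - B * ⅟D * C) r.1 b) =
      (fun r => A r.1 b) - (B.submatrix Subtype.val id * ⅟D) *ᵥ fun t => C t b := by
    ext r
    simp [Matrix.mul_apply, mulVec, dotProduct]
  rw [qdetEq_iff_cornerQdetEq, qdetEq_iff_cornerQdetEq, delMat_fromBlocks_inl, hrow, hcol,
    cornerQdetEq_submatrix_equiv_iff, cornerQdetEq_fromBlocks, delMat_sub_mul_mul, hp, hu, hv]
  rfl

end Corner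

end Quasidet

open Quasidet in
theorem quasidet_deletion_general {R : Type*} [Ring R] {m s : ℕ}
    (A : Matrix (Fin (m + 1)) (Fin (m + 1)) R) (B : Matrix (Fin (m + 1)) (Fin s) R)
    (C : Matrix (Fin s) (Fin (m + 1)) R) (D : Matrix (Fin s) (Fin s) R)
    (hD : IsUnit D) (i j : Fin (m + 1)) :
    (A - B * Ring.inverse D * C).submatrix i.succAbove j.succAbove =
      A.submatrix i.succAbove j.succAbove -
        B.submatrix i.succAbove id * Ring.inverse D * C.submatrix id j.succAbove ∧
    ∀ (a b : Fin (m + 1)) (ha : a ≠ i) (hb : b ≠ j) (q : R),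
      QdetEq (delMat (A - B * Ring.inverse D * C) i j) ⟨a, ha⟩ ⟨b, hb⟩ q ↔
      QdetEq (delMat (Matrix.fromBlocks A B C D) (Sum.inl i) (Sum.inl j))
        ⟨Sum.inl a, fun h => ha (Sum.inl.inj h)⟩
        ⟨Sum.inl b, fun h => hb (Sum.inl.inj h)⟩ q := by
  refine ⟨submatrix_sub_mul_mul A B _ C _ _, fun a b ha hb q => ?_⟩
  obtain ⟨_⟩ := hD.nonempty_invertible
  rw [Ring.inverse_invertible, delMat_sub_mul_mul, delMat_fromBlocks_inl,
    qdetEq_submatrix_equiv_iff]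
  exact qdetEq_sub_mul_invOf_mul_iff (delMat A i j) (B.submatrix Subtype.val id)
    (C.submatrix id Subtype.val) D ⟨a, ha⟩ ⟨b, hb⟩ q

/-- **Quasideterminants commute with deletion of a row and a column of the first block**
(Corollary). For a block matrix `X = fromBlocks A B C D` with `D` invertible, deleting row
`i` and column `j` (of the first block) from the Schur complement `A − B D⁻¹ C` yields the
Schur complement of `X` with the same row and column deleted; consequently, for `a ≠ i`,
`b ≠ j`, the `(a,b)` quasideterminant of `|X|₁₁` with row `i` and column `j` deleted exists
iff the `(a,b)` quasideterminant of `X` with row `i` and column `j` deleted does, and then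
they are equal. -/
theorem quasidet_deletion {R : Type*} [Ring R] {m s : ℕ} (hs : 1 ≤ s)
    (A : Matrix (Fin (m + 1)) (Fin (m + 1)) R) (B : Matrix (Fin (m + 1)) (Fin s) R)
    (C : Matrix (Fin s) (Fin (m + 1)) R) (D : Matrix (Fin s) (Fin s) R)
    (hD : IsUnit D) (i j : Fin (m + 1)) :
    (A - B * Ring.inverse D * C).submatrix i.succAbove j.succAbove =
      A.submatrix i.succAbove j.succAbove -
        B.submatrix i.succAbove id * Ring.inverse D * C.submatrix id j.succAbove ∧
    ∀ (a b : Fin (m + 1)) (ha : a ≠ i) (hb : b ≠ j) (q : R),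
      QdetEq (delMat (A - B * Ring.inverse D * C) i j) ⟨a, ha⟩ ⟨b, hb⟩ q ↔
      QdetEq (delMat (Matrix.fromBlocks A B C D) (Sum.inl i) (Sum.inl j))
        ⟨Sum.inl a, fun h => ha (Sum.inl.inj h)⟩
        ⟨Sum.inl b, fun h => hb (Sum.inl.inj h)⟩ q :=
  quasidet_deletion_general A B C D hD i j
end
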